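/- arXiv:2303.12519 — 6 statements merged into one kernel-verified Lean document; each statement's English description precedes it below -/
import Mathlib

section
/- Let A ∈ ℝ^{n×n}, q ∈ ℝⁿ, ψ : ℝⁿ → ℝⁿ, and let φ₁, φ₂ ∈ ℝ^{n×n} be positive diagonal matrices. Then z ∈ ℝⁿ solves ICP(q,A,ψ) if and only if (φ₁A + φ₂)z = |(φ₁A − φ₂)z + φ₁q + φ₂ψ(z)| − φ₁q + φ₂ψ(z). -/
open Matrix Finset

noncomputable def specRad {n : ℕ} (A : Matrix (Fin n) (Fin n) ℝ) : ℝ :=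
  (spectralRadius ℂ (A.map (algebraMap ℝ ℂ))).toReal

def matAbs {n : ℕ} (A : Matrix (Fin n) (Fin n) ℝ) : Matrix (Fin n) (Fin n) ℝ :=
  fun i j => |A i j|

def vecAbs {n : ℕ} (x : Fin n → ℝ) : Fin n → ℝ := fun i => |x i|

def cmpMat {n : ℕ} (A : Matrix (Fin n) (Fin n) ℝ) : Matrix (Fin n) (Fin n) ℝ :=
  fun i j => if i = j then |A i j| else -|A i j|

def PosDiag {n : ℕ} (Φ : Matrix (Fin n) (Fin n) ℝ) : Prop :=
  Φ.IsDiag ∧ ∀ i, 0 < Φ i i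

def ZMat {n : ℕ} (A : Matrix (Fin n) (Fin n) ℝ) : Prop :=
  ∀ i j, i ≠ j → A i j ≤ 0

def NonsingularMMatrix {n : ℕ} (A : Matrix (Fin n) (Fin n) ℝ) : Prop :=
  ZMat A ∧ IsUnit A.det ∧ ∀ i j, 0 ≤ A⁻¹ i j

def SDD {n : ℕ} (A : Matrix (Fin n) (Fin n) ℝ) : Prop :=
  ∀ i, ∑ j ∈ Finset.univ.erase i, |A i j| < |A i i|

def ICPsol {n : ℕ} (A : Matrix (Fin n) (Fin n) ℝ) (q : Fin n → ℝ)
    (ψ : (Fin n → ℝ) → (Fin n → ℝ)) (z : Fin n → ℝ) : Prop :=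
  (∀ i, 0 ≤ (A *ᵥ z + q) i) ∧ (∀ i, 0 ≤ (z - ψ z) i) ∧ (A *ᵥ z + q) ⬝ᵥ (z - ψ z) = 0

def HplusMatrix {n : ℕ} (A : Matrix (Fin n) (Fin n) ℝ) : Prop :=
  NonsingularMMatrix (cmpMat A) ∧ ∀ i, 0 < A i i


lemma key_scalar (x y : ℝ) : x + y = |x - y| ↔ 0 ≤ x ∧ 0 ≤ y ∧ x * y = 0 := by
  constructor
  · intro h
    rcases abs_cases (x - y) with ⟨he, _⟩ | ⟨he, _⟩ <;>
      exact ⟨by nlinarith, by nlinarith, by nlinarith⟩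
  · rintro ⟨hx, hy, hxy⟩
    rcases mul_eq_zero.mp hxy with h | h
    · rw [h, zero_add, zero_sub, abs_neg, abs_of_nonneg hy]
    · rw [h, add_zero, sub_zero, abs_of_nonneg hx]

lemma diag_mulVec {n : ℕ} {Φ : Matrix (Fin n) (Fin n) ℝ} (hd : Φ.IsDiag)
    (x : Fin n → ℝ) (i : Fin n) : (Φ *ᵥ x) i = Φ i i * x i := by
  simp only [Matrix.mulVec, dotProduct]
  rw [Finset.sum_eq_single i]
  · intro j _ hj
    rw [hd (Ne.symm hj)]; ring
  · simp

/-- the ICP is equivalent to the fixed-point equation. -/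
theorem stmt_0 {n : ℕ} (A : Matrix (Fin n) (Fin n) ℝ) (q : Fin n → ℝ)
    (ψ : (Fin n → ℝ) → (Fin n → ℝ)) (φ₁ φ₂ : Matrix (Fin n) (Fin n) ℝ)
    (hφ₁ : PosDiag φ₁) (hφ₂ : PosDiag φ₂) (z : Fin n → ℝ) :
    ICPsol A q ψ z ↔
      (φ₁ * A + φ₂) *ᵥ z =
        vecAbs ((φ₁ * A - φ₂) *ᵥ z + φ₁ *ᵥ q + φ₂ *ᵥ ψ z) - φ₁ *ᵥ q + φ₂ *ᵥ ψ z := by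
  obtain ⟨hd1, hp1⟩ := hφ₁
  obtain ⟨hd2, hp2⟩ := hφ₂
  set u : Fin n → ℝ := A *ᵥ z + q with hu
  set v : Fin n → ℝ := z - ψ z with hv
  have key : ∀ i,
      ((φ₁ * A + φ₂) *ᵥ z) i =
        (vecAbs ((φ₁ * A - φ₂) *ᵥ z + φ₁ *ᵥ q + φ₂ *ᵥ ψ z) - φ₁ *ᵥ q + φ₂ *ᵥ ψ z) i
      ↔ (0 ≤ u i ∧ 0 ≤ v i ∧ u i * v i = 0) := by
    intro i
    have h1 : ((φ₁ * A + φ₂) *ᵥ z) i = φ₁ i i * (A *ᵥ z) i + φ₂ i i * z i := by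
      rw [Matrix.add_mulVec, ← Matrix.mulVec_mulVec]
      simp only [Pi.add_apply, diag_mulVec hd1, diag_mulVec hd2]
    have h2 : ((φ₁ * A - φ₂) *ᵥ z + φ₁ *ᵥ q + φ₂ *ᵥ ψ z) i =
        (φ₁ i i * u i) - (φ₂ i i * v i) := by
      rw [Matrix.sub_mulVec, ← Matrix.mulVec_mulVec]
      simp only [Pi.add_apply, Pi.sub_apply, diag_mulVec hd1, diag_mulVec hd2, hu, hv]
      ring
    have hx := key_scalar (φ₁ i i * u i) (φ₂ i i * v i)
    simp only [Pi.add_apply, Pi.sub_apply, vecAbs, h1, h2, diag_mulVec hd1, diag_mulVec hd2]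
    constructor
    · intro h
      have heq : φ₁ i i * u i + φ₂ i i * v i = |φ₁ i i * u i - φ₂ i i * v i| := by
        simp only [hu, hv, Pi.add_apply, Pi.sub_apply] at h ⊢
        linarith
      obtain ⟨ha, hb, hc⟩ := hx.mp heq
      refine ⟨nonneg_of_mul_nonneg_right ?_ (hp1 i), nonneg_of_mul_nonneg_right ?_ (hp2 i), ?_⟩
      · exact ha
      · exact hb
      · have : (φ₁ i i * φ₂ i i) * (u i * v i) = 0 := by linarith [hc]; 
        rcases mul_eq_zero.mp this with h' | h'
        · exact absurd h' (ne_of_gt (mul_pos (hp1 i) (hp2 i)))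
        · exact h'
    · rintro ⟨ha, hb, hc⟩
      have heq := hx.mpr ⟨mul_nonneg (le_of_lt (hp1 i)) ha,
        mul_nonneg (le_of_lt (hp2 i)) hb, by rw [show φ₁ i i * u i * (φ₂ i i * v i) = (φ₁ i i * φ₂ i i) * (u i * v i) by ring, hc, mul_zero]⟩
      simp only [hu, hv, Pi.add_apply, Pi.sub_apply] at heq ⊢
      linarith
  constructor
  · rintro ⟨h1, h2, h3⟩
    have hz : ∀ i ∈ Finset.univ, u i * v i = 0 := by
      rw [← Finset.sum_eq_zero_iff_of_nonneg (fun i _ => mul_nonneg (h1 i) (h2 i))]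
      exact h3
    funext i
    exact (key i).mpr ⟨h1 i, h2 i, hz i (Finset.mem_univ i)⟩
  · intro h
    have hall : ∀ i, 0 ≤ u i ∧ 0 ≤ v i ∧ u i * v i = 0 := fun i =>
      (key i).mp (congrFun h i)
    refine ⟨fun i => (hall i).1, fun i => (hall i).2.1, ?_⟩
    exact Finset.sum_eq_zero fun i _ => (hall i).2.2
end

section
/- Let A ∈ ℝ^{n×n} be a strictly diagonally dominant matrix. Then for every E ∈ ℝ^{n×n}, ‖A⁻¹E‖_∞ ≤ max_{1≤i≤n} (|E|e)_i / (⟨A⟩e)_i, where e = (1,1,…,1)ᵀ. -/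
open Matrix Finset

attribute [local instance] Matrix.linftyOpNormedAddCommGroup

/-- bound on ‖A⁻¹E‖_∞ for a strictly diagonally dominant A. -/
theorem stmt_2 {n : ℕ} (hn : 0 < n) (A : Matrix (Fin n) (Fin n) ℝ) (hA : SDD A)
    (E : Matrix (Fin n) (Fin n) ℝ) :
    ‖A⁻¹ * E‖ ≤
      ⨆ i : Fin n, (matAbs E *ᵥ (fun _ => (1 : ℝ))) i / (cmpMat A *ᵥ (fun _ => (1 : ℝ))) i := by

  haveI : Nonempty (Fin n) := ⟨⟨0, hn⟩⟩
  have hdet : IsUnit A.det := by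
    apply isUnit_iff_ne_zero.mpr
    apply det_ne_zero_of_sum_row_lt_diag
    intro k; simpa [Real.norm_eq_abs] using hA k
  set M := A⁻¹ * E with hM
  have hAM : A * M = E := by
    rw [hM, ← Matrix.mul_assoc, Matrix.mul_nonsing_inv A hdet, Matrix.one_mul]
  have hcmp : ∀ i, (cmpMat A *ᵥ (fun _ => (1:ℝ))) i
      = |A i i| - ∑ j ∈ Finset.univ.erase i, |A i j| := by
    intro i
    simp only [Matrix.mulVec, dotProduct, mul_one, cmpMat]
    rw [← Finset.add_sum_erase _ _ (Finset.mem_univ i), if_pos rfl]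
    have h1 : ∀ j ∈ Finset.univ.erase i, (if i = j then |A i j| else -|A i j|) = -(|A i j|) :=
      fun j hj => if_neg fun h => (Finset.mem_erase.mp hj).1 h.symm
    rw [Finset.sum_congr rfl h1, Finset.sum_neg_distrib]
    ring
  have hden : ∀ i, 0 < (cmpMat A *ᵥ (fun _ => (1:ℝ))) i := by
    intro i; rw [hcmp i]; exact sub_pos.mpr (hA i)
  have hEabs : ∀ i, (matAbs E *ᵥ (fun _ => (1:ℝ))) i = ∑ j, |E i j| := by
    intro i; simp [matAbs, Matrix.mulVec, dotProduct]
  set f : Fin n → ℝ := fun i =>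
    (matAbs E *ᵥ (fun _ => (1 : ℝ))) i / (cmpMat A *ᵥ (fun _ => (1 : ℝ))) i with hf
  have hbdd : BddAbove (Set.range f) := Set.Finite.bddAbove (Set.finite_range f)
  obtain ⟨i₀, -, hi₀⟩ := Finset.exists_mem_eq_sup Finset.univ Finset.univ_nonempty
    (fun i => ∑ j, ‖M i j‖₊)
  have hnorm : ‖M‖ = ∑ j, |M i₀ j| := by
    rw [Matrix.linfty_opNorm_def, hi₀]
    push_cast
    simp [Real.norm_eq_abs]
  set x : Fin n → ℝ := fun j => if 0 ≤ M i₀ j then 1 else -1 with hx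
  have hx1 : ∀ j, |x j| = 1 := by
    intro j; by_cases h : 0 ≤ M i₀ j <;> simp [hx, h]
  set y : Fin n → ℝ := M *ᵥ x with hy
  have hyi₀ : y i₀ = ∑ j, |M i₀ j| := by
    simp only [hy, Matrix.mulVec, dotProduct]
    refine Finset.sum_congr rfl fun j _ => ?_
    by_cases h : 0 ≤ M i₀ j
    · rw [hx]; simp [h, abs_of_nonneg h]
    · rw [hx]; simp [h, abs_of_neg (lt_of_not_ge h)]
  obtain ⟨k, -, hk⟩ := Finset.exists_max_image Finset.univ (fun i => |y i|)
    Finset.univ_nonempty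
  have hk' : ∀ i, |y i| ≤ |y k| := fun i => hk i (Finset.mem_univ i)
  have hAy : A *ᵥ y = E *ᵥ x := by rw [hy, Matrix.mulVec_mulVec, hAM]
  have hrow : A k k * y k = (E *ᵥ x) k - ∑ j ∈ Finset.univ.erase k, A k j * y j := by
    have := congrFun hAy k
    simp only [Matrix.mulVec, dotProduct] at this
    rw [← Finset.add_sum_erase _ _ (Finset.mem_univ k)] at this
    simp only [Matrix.mulVec, dotProduct]
    linarith [this]
  have hEx : |(E *ᵥ x) k| ≤ ∑ j, |E k j| := by
    simp only [Matrix.mulVec, dotProduct]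
    refine le_trans (Finset.abs_sum_le_sum_abs _ _) ?_
    refine Finset.sum_le_sum fun j _ => ?_
    rw [abs_mul, hx1 j, mul_one]
  have hkey : (|A k k| - ∑ j ∈ Finset.univ.erase k, |A k j|) * |y k| ≤ ∑ j, |E k j| := by
    have h1 : |A k k| * |y k| ≤ |(E *ᵥ x) k| + ∑ j ∈ Finset.univ.erase k, |A k j| * |y j| := by
      rw [← abs_mul, hrow]
      refine le_trans (abs_sub _ _) ?_
      gcongr
      refine le_trans (Finset.abs_sum_le_sum_abs _ _) ?_
      refine Finset.sum_le_sum fun j _ => ?_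
      rw [abs_mul]
    have h2 : ∑ j ∈ Finset.univ.erase k, |A k j| * |y j|
        ≤ (∑ j ∈ Finset.univ.erase k, |A k j|) * |y k| := by
      rw [Finset.sum_mul]
      exact Finset.sum_le_sum fun j _ => mul_le_mul_of_nonneg_left (hk' j) (abs_nonneg _)
    nlinarith [hEx]
  have hyk : |y k| ≤ f k := by
    rw [hf]
    dsimp only
    rw [hEabs k, hcmp k, le_div_iff₀ (by rw [← hcmp k]; exact hden k)]
    linarith [hkey]
  calc ‖M‖ = ∑ j, |M i₀ j| := hnorm
    _ = y i₀ := hyi₀.symm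
    _ ≤ |y i₀| := le_abs_self _
    _ ≤ |y k| := hk' i₀
    _ ≤ f k := hyk
    _ ≤ ⨆ i : Fin n, f i := le_ciSup hbdd k
end

section
/- Let A = (M₁+φ) − (N₁+φ) be a splitting of A ∈ ℝ^{n×n} with φ diagonal and φ₁, φ₂ positive diagonal, and suppose M_{φ₁} + φ_{φ₁} + φ₂ is nonsingular. Let G ≥ 0 be a matrix with |ψ(x) − ψ(y)| ≤ G|x − y| for all x, y ∈ ℝⁿ, and set L = |(M_{φ₁}+φ_{φ₁}+φ₂)⁻¹| (|N_{φ₁}+φ_{φ₁}| + |A_{φ₁}−φ₂| + 2φ₂G). If ρ(L) < 1 and z* ∈ ℝⁿ is a solution of ICP(q,A,ψ), then for every initial vector z⁰ ∈ ℝⁿ the sequence generated by Method 3.1 converges to z*, and z* is the unique solution of ICP(q,A,ψ). -/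
open Matrix Finset

/-! Method 3.1 is the fixed-point iteration of a map `T`. By complementarity,
`|φ₁(Az + q) − φ₂(z − ψ z)| = φ₁(Az + q) + φ₂(z − ψ z)` at a solution `z`, which makes every
solution a fixed point. The map satisfies the entrywise Lipschitz bound `|T x − T y| ≤ L |x − y|`
with `L ≥ 0`, so `|z^k − z*| ≤ L^k |z^0 − z*|`, and `L^k → 0` by Gelfand's formula since
`ρ(L) < 1`. Uniqueness: the constant sequence at another solution also converges to `z*`. -/

open Filter Topology
open scoped ENNReal

theorem spectralRadius_lt_top {𝕜 A : Type*} [NormedField 𝕜] [NormedRing A] [NormedAlgebra 𝕜 A]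
    [CompleteSpace A] (a : A) : spectralRadius 𝕜 a < ⊤ :=
  (spectrum.spectralRadius_le_pow_nnnorm_pow_one_div 𝕜 a 0).trans_lt <|
    ENNReal.mul_lt_top (by simp) (by simp)

theorem tendsto_pow_nhds_zero_of_spectralRadius_lt_one {A : Type*} [NormedRing A]
    [NormedAlgebra ℂ A] [CompleteSpace A] {a : A} (ha : spectralRadius ℂ a < 1) :
    Tendsto (fun k : ℕ => a ^ k) atTop (𝓝 0) := by
  obtain ⟨r, hρr, hr1⟩ := exists_between ha
  have hgelfand := spectrum.pow_nnnorm_pow_one_div_tendsto_nhds_spectralRadius a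
  have hbound : ∀ᶠ k : ℕ in atTop, (‖a ^ k‖₊ : ℝ≥0∞) ≤ r ^ k := by
    filter_upwards [hgelfand.eventually_lt_const hρr, eventually_gt_atTop 0] with k hk hk0
    rw [one_div, ENNReal.rpow_inv_lt_iff (by positivity), ENNReal.rpow_natCast] at hk
    exact hk.le
  have hnnnorm : Tendsto (fun k : ℕ => (‖a ^ k‖₊ : ℝ≥0∞)) atTop (𝓝 0) :=
    tendsto_of_tendsto_of_tendsto_of_le_of_le' tendsto_const_nhds
      (ENNReal.tendsto_pow_atTop_nhds_zero_of_lt_one hr1) (.of_forall fun _ => zero_le) hbound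
  rw [← ENNReal.coe_zero, ENNReal.tendsto_coe] at hnnnorm
  exact tendsto_zero_iff_norm_tendsto_zero.2 (by simpa using NNReal.tendsto_coe.2 hnnnorm)

theorem Matrix.tendsto_pow_mulVec_of_specRad_lt_one {n : ℕ} {L : Matrix (Fin n) (Fin n) ℝ}
    (hL : specRad L < 1) (v : Fin n → ℝ) :
    Tendsto (fun k : ℕ => L ^ k *ᵥ v) atTop (𝓝 0) := by
  -- any algebra norm will do: all of them induce the product topology used in the conclusion
  let := Matrix.linftyOpNormedRing (n := Fin n) (α := ℂ)
  let := Matrix.linftyOpNormedAlgebra (n := Fin n) (α := ℂ) (R := ℂ)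
  have hρ : spectralRadius ℂ (L.map (algebraMap ℝ ℂ)) < 1 := by
    rwa [specRad, ← ENNReal.toReal_one, ENNReal.toReal_lt_toReal (spectralRadius_lt_top _).ne
      ENNReal.one_ne_top] at hL
  have hLpow : (fun k : ℕ => L ^ k) = fun k => (L.map (algebraMap ℝ ℂ) ^ k).map Complex.re := by
    ext k : 1
    rw [← RingHom.mapMatrix_apply, ← map_pow, RingHom.mapMatrix_apply, Matrix.map_map]
    ext i j
    simp
  have hLpow0 : Tendsto (fun k : ℕ => L ^ k) atTop (𝓝 0) := by
    rw [hLpow, ← Matrix.map_zero Complex.re Complex.zero_re]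
    exact ((continuous_id.matrix_map Complex.continuous_re).tendsto 0).comp
      (tendsto_pow_nhds_zero_of_spectralRadius_lt_one hρ)
  rw [← zero_mulVec v]
  exact ((continuous_id.matrix_mulVec continuous_const).tendsto 0).comp hLpow0

section EntrywiseBounds

variable {n : ℕ}

theorem vecAbs_mulVec_le (B : Matrix (Fin n) (Fin n) ℝ) (v : Fin n → ℝ) :
    vecAbs (B *ᵥ v) ≤ matAbs B *ᵥ vecAbs v := fun i => by
  simpa only [vecAbs, matAbs, mulVec, dotProduct, abs_mul] using
    Finset.abs_sum_le_sum_abs (fun j => B i j * v j) Finset.univ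

theorem mulVec_mono_of_nonneg {B : Matrix (Fin n) (Fin n) ℝ} (hB : ∀ i j, 0 ≤ B i j)
    {u v : Fin n → ℝ} (huv : u ≤ v) : B *ᵥ u ≤ B *ᵥ v := fun i =>
  dotProduct_le_dotProduct_of_nonneg_left huv (hB i)

theorem matAbs_of_nonneg {B : Matrix (Fin n) (Fin n) ℝ} (hB : ∀ i j, 0 ≤ B i j) :
    matAbs B = B :=
  Matrix.ext fun i j => abs_of_nonneg (hB i j)

theorem mul_apply_nonneg {B C : Matrix (Fin n) (Fin n) ℝ} (hB : ∀ i j, 0 ≤ B i j)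
    (hC : ∀ i j, 0 ≤ C i j) (i j : Fin n) : 0 ≤ (B * C) i j :=
  by rw [mul_apply]; exact Finset.sum_nonneg fun l _ => mul_nonneg (hB i l) (hC l j)

theorem le_pow_mulVec_of_le_mulVec {L : Matrix (Fin n) (Fin n) ℝ} (hL : ∀ i j, 0 ≤ L i j)
    {e : ℕ → Fin n → ℝ} (he : ∀ k, e (k + 1) ≤ L *ᵥ e k) (k : ℕ) :
    e k ≤ L ^ k *ᵥ e 0 := by
  induction k with
  | zero => rw [pow_zero, one_mulVec]
  | succ k ih =>
    calc e (k + 1) ≤ L *ᵥ e k := he k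
      _ ≤ L *ᵥ (L ^ k *ᵥ e 0) := mulVec_mono_of_nonneg hL ih
      _ = L ^ (k + 1) *ᵥ e 0 := by rw [mulVec_mulVec, ← pow_succ']

end EntrywiseBounds

theorem PosDiag.nonneg {n : ℕ} {Φ : Matrix (Fin n) (Fin n) ℝ} (hΦ : PosDiag Φ) (i j : Fin n) :
    0 ≤ Φ i j := by
  obtain rfl | hij := eq_or_ne i j
  · exact (hΦ.2 i).le
  · exact (hΦ.1 hij).ge

theorem tendsto_of_vecAbs_sub_le_mulVec {n : ℕ} {T : (Fin n → ℝ) → Fin n → ℝ}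
    {L : Matrix (Fin n) (Fin n) ℝ} (hL : ∀ i j, 0 ≤ L i j) (hρ : specRad L < 1)
    (hT : ∀ x y, vecAbs (T x - T y) ≤ L *ᵥ vecAbs (x - y)) {x : Fin n → ℝ} (hx : T x = x)
    {z : ℕ → Fin n → ℝ} (hz : ∀ k, z (k + 1) = T (z k)) : Tendsto z atTop (𝓝 x) := by
  have herr : ∀ k, vecAbs (z k - x) ≤ L ^ k *ᵥ vecAbs (z 0 - x) :=
    le_pow_mulVec_of_le_mulVec hL fun k => by simpa only [hz k, hx] using hT (z k) x
  refine tendsto_pi_nhds.2 fun i => tendsto_sub_nhds_zero_iff.1 ?_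
  exact squeeze_zero_norm (fun k => herr k i)
    (tendsto_pi_nhds.1 (Matrix.tendsto_pow_mulVec_of_specRad_lt_one hρ _) i)

section ModulusStep

variable {n : ℕ}

/-- Method 3.1 is the iteration of
`modulusStep (M_{φ₁} + φ_{φ₁} + φ₂)⁻¹ (N_{φ₁} + φ_{φ₁}) (A_{φ₁} - φ₂) φ₂ (φ₁ q) ψ`. -/
def modulusStep (B N P D : Matrix (Fin n) (Fin n) ℝ) (c : Fin n → ℝ)
    (ψ : (Fin n → ℝ) → Fin n → ℝ) (x : Fin n → ℝ) : Fin n → ℝ :=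
  B *ᵥ (N *ᵥ x + vecAbs (P *ᵥ x + c + D *ᵥ ψ x) - c + D *ᵥ ψ x)

theorem vecAbs_modulusStep_sub_le {B N P D G : Matrix (Fin n) (Fin n) ℝ} {c : Fin n → ℝ}
    {ψ : (Fin n → ℝ) → Fin n → ℝ} (hD : ∀ i j, 0 ≤ D i j)
    (hψ : ∀ x y, vecAbs (ψ x - ψ y) ≤ G *ᵥ vecAbs (x - y)) (x y : Fin n → ℝ) :
    vecAbs (modulusStep B N P D c ψ x - modulusStep B N P D c ψ y) ≤
      (matAbs B * (matAbs N + matAbs P + 2 • (D * G))) *ᵥ vecAbs (x - y) := by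
  set e := vecAbs (x - y)
  set U : (Fin n → ℝ) → Fin n → ℝ := fun x => P *ᵥ x + c + D *ᵥ ψ x
  have hDψ : vecAbs (D *ᵥ (ψ x - ψ y)) ≤ (D * G) *ᵥ e :=
    calc _ ≤ matAbs D *ᵥ vecAbs (ψ x - ψ y) := vecAbs_mulVec_le D _
      _ = D *ᵥ vecAbs (ψ x - ψ y) := by rw [matAbs_of_nonneg hD]
      _ ≤ D *ᵥ (G *ᵥ e) := mulVec_mono_of_nonneg hD (hψ x y)
      _ = (D * G) *ᵥ e := mulVec_mulVec _ _ _
  have hU : vecAbs (vecAbs (U x) - vecAbs (U y)) ≤ matAbs P *ᵥ e + (D * G) *ᵥ e := fun i =>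
    calc _ ≤ |U x i - U y i| := abs_abs_sub_abs_le_abs_sub _ _
      _ = |(P *ᵥ (x - y)) i + (D *ᵥ (ψ x - ψ y)) i| := by
        simp only [U, mulVec_sub, Pi.add_apply, Pi.sub_apply]; ring_nf
      _ ≤ _ := (abs_add_le _ _).trans (add_le_add (vecAbs_mulVec_le P _ i) (hDψ i))
  have hinner : vecAbs (N *ᵥ x + vecAbs (U x) - c + D *ᵥ ψ x -
      (N *ᵥ y + vecAbs (U y) - c + D *ᵥ ψ y)) ≤ (matAbs N + matAbs P + 2 • (D * G)) *ᵥ e :=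
    fun i => calc
      _ = |(N *ᵥ (x - y)) i + (vecAbs (U x) i - vecAbs (U y) i) + (D *ᵥ (ψ x - ψ y)) i| := by
        simp only [vecAbs, mulVec_sub, Pi.add_apply, Pi.sub_apply]; ring_nf
      _ ≤ (matAbs N *ᵥ e) i + ((matAbs P *ᵥ e) i + ((D * G) *ᵥ e) i) + ((D * G) *ᵥ e) i :=
        (abs_add_three _ _ _).trans (add_le_add_three (vecAbs_mulVec_le N _ i) (hU i) (hDψ i))
      _ = _ := by simp only [add_mulVec, two_smul, Pi.add_apply]; ring
  calc _ = vecAbs (B *ᵥ (N *ᵥ x + vecAbs (U x) - c + D *ᵥ ψ x -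
        (N *ᵥ y + vecAbs (U y) - c + D *ᵥ ψ y))) := by rw [modulusStep, modulusStep, mulVec_sub]
    _ ≤ matAbs B *ᵥ ((matAbs N + matAbs P + 2 • (D * G)) *ᵥ e) :=
      (vecAbs_mulVec_le B _).trans (mulVec_mono_of_nonneg (fun _ _ => abs_nonneg _) hinner)
    _ = _ := mulVec_mulVec _ _ _

theorem vecAbs_diag_mulVec_sub_eq {Φ₁ Φ₂ : Matrix (Fin n) (Fin n) ℝ} (hΦ₁ : Φ₁.IsDiag)
    (hΦ₂ : Φ₂.IsDiag) (h₁ : ∀ i, 0 ≤ Φ₁ i i) (h₂ : ∀ i, 0 ≤ Φ₂ i i) {r s : Fin n → ℝ}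
    (hr : 0 ≤ r) (hs : 0 ≤ s) (hrs : r ⬝ᵥ s = 0) :
    vecAbs (Φ₁ *ᵥ r - Φ₂ *ᵥ s) = Φ₁ *ᵥ r + Φ₂ *ᵥ s := by
  have hzero : ∀ i, r i * s i = 0 := fun i =>
    (Finset.sum_eq_zero_iff_of_nonneg fun j _ => mul_nonneg (hr j) (hs j)).1 hrs i
      (Finset.mem_univ i)
  rw [← hΦ₁.diagonal_diag, ← hΦ₂.diagonal_diag]
  ext i
  simp only [vecAbs, Pi.sub_apply, Pi.add_apply, mulVec_diagonal, diag_apply]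
  rcases mul_eq_zero.1 (hzero i) with h | h
  · simp [h, abs_of_nonneg (mul_nonneg (h₂ i) (hs i))]
  · simp [h, abs_of_nonneg (mul_nonneg (h₁ i) (hr i))]

theorem modulusStep_eq_self_of_ICPsol {A N W Φ₁ Φ₂ : Matrix (Fin n) (Fin n) ℝ} {q : Fin n → ℝ}
    {ψ : (Fin n → ℝ) → Fin n → ℝ} (hΦ₁ : Φ₁.IsDiag) (hΦ₂ : Φ₂.IsDiag) (h₁ : ∀ i, 0 ≤ Φ₁ i i)
    (h₂ : ∀ i, 0 ≤ Φ₂ i i) (hW : IsUnit W.det) (hWsplit : W = N + Φ₁ * A + Φ₂)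
    {w : Fin n → ℝ} (hw : ICPsol A q ψ w) :
    modulusStep W⁻¹ N (Φ₁ * A - Φ₂) Φ₂ (Φ₁ *ᵥ q) ψ w = w := by
  obtain ⟨hr, hs, hrs⟩ := hw
  have hU : (Φ₁ * A - Φ₂) *ᵥ w + Φ₁ *ᵥ q + Φ₂ *ᵥ ψ w =
      Φ₁ *ᵥ (A *ᵥ w + q) - Φ₂ *ᵥ (w - ψ w) := by
    simp only [sub_mulVec, mulVec_add, mulVec_sub, mulVec_mulVec]
    abel
  have hinner : N *ᵥ w + vecAbs ((Φ₁ * A - Φ₂) *ᵥ w + Φ₁ *ᵥ q + Φ₂ *ᵥ ψ w) - Φ₁ *ᵥ q +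
      Φ₂ *ᵥ ψ w = W *ᵥ w := by
    rw [hU, vecAbs_diag_mulVec_sub_eq hΦ₁ hΦ₂ h₁ h₂ hr hs hrs, hWsplit]
    simp only [add_mulVec, mulVec_add, mulVec_sub, mulVec_mulVec]
    abel
  rw [modulusStep, hinner, mulVec_mulVec, nonsing_inv_mul W hW, one_mulVec]

end ModulusStep

theorem stmt_4_general {n : ℕ} (A M₁ N₁ φ φ₁ φ₂ G : Matrix (Fin n) (Fin n) ℝ)
    (q : Fin n → ℝ) (ψ : (Fin n → ℝ) → (Fin n → ℝ))
    (hsplit : A = (M₁ + φ) - (N₁ + φ))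
    (hφ₁ : PosDiag φ₁) (hφ₂ : PosDiag φ₂)
    (hns : IsUnit (φ₁ * M₁ + φ₁ * φ + φ₂).det)
    (hG : ∀ i j, 0 ≤ G i j)
    (hψ : ∀ x y : Fin n → ℝ, ∀ i, |ψ x i - ψ y i| ≤ (G *ᵥ vecAbs (x - y)) i)
    (hρ : specRad (matAbs ((φ₁ * M₁ + φ₁ * φ + φ₂)⁻¹) *
      (matAbs (φ₁ * N₁ + φ₁ * φ) + matAbs (φ₁ * A - φ₂) + 2 • (φ₂ * G))) < 1)
    (zstar : Fin n → ℝ) (hz : ICPsol A q ψ zstar)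
    (z : ℕ → Fin n → ℝ)
    (hit : ∀ k, z (k + 1) = (φ₁ * M₁ + φ₁ * φ + φ₂)⁻¹ *ᵥ
      ((φ₁ * N₁ + φ₁ * φ) *ᵥ z k +
        vecAbs ((φ₁ * A - φ₂) *ᵥ z k + φ₁ *ᵥ q + φ₂ *ᵥ ψ (z k)) -
        φ₁ *ᵥ q + φ₂ *ᵥ ψ (z k))) :
    Filter.Tendsto z Filter.atTop (nhds zstar) ∧
      ∀ w : Fin n → ℝ, ICPsol A q ψ w → w = zstar := by
  have hW : φ₁ * M₁ + φ₁ * φ + φ₂ = φ₁ * N₁ + φ₁ * φ + φ₁ * A + φ₂ := by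
    rw [hsplit]
    noncomm_ring
  have hfix : ∀ w, ICPsol A q ψ w → modulusStep (φ₁ * M₁ + φ₁ * φ + φ₂)⁻¹
      (φ₁ * N₁ + φ₁ * φ) (φ₁ * A - φ₂) φ₂ (φ₁ *ᵥ q) ψ w = w := fun _ hw =>
    modulusStep_eq_self_of_ICPsol hφ₁.1 hφ₂.1 (fun i => (hφ₁.2 i).le) (fun i => (hφ₂.2 i).le)
      hns hW hw
  have hL : ∀ i j, 0 ≤ (matAbs ((φ₁ * M₁ + φ₁ * φ + φ₂)⁻¹) *
      (matAbs (φ₁ * N₁ + φ₁ * φ) + matAbs (φ₁ * A - φ₂) + 2 • (φ₂ * G))) i j :=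
    mul_apply_nonneg (fun _ _ => abs_nonneg _) fun i j => by
      have := mul_apply_nonneg hφ₂.nonneg hG i j
      simp only [Matrix.add_apply, Matrix.smul_apply, matAbs]
      positivity
  have hconv : ∀ {w}, ICPsol A q ψ w → ∀ {z : ℕ → Fin n → ℝ},
      (∀ k, z (k + 1) = modulusStep (φ₁ * M₁ + φ₁ * φ + φ₂)⁻¹ (φ₁ * N₁ + φ₁ * φ)
        (φ₁ * A - φ₂) φ₂ (φ₁ *ᵥ q) ψ (z k)) → Tendsto z atTop (𝓝 w) := fun hw _ hz =>
    tendsto_of_vecAbs_sub_le_mulVec hL hρ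
      (vecAbs_modulusStep_sub_le hφ₂.nonneg fun x y => hψ x y) (hfix _ hw) hz
  exact ⟨hconv hz hit, fun w hw => tendsto_const_nhds_iff.1 (hconv hz fun _ => (hfix w hw).symm)⟩

/-- convergence of Method 3.1 when ρ(L) < 1 (Theorem 4.1). -/
theorem stmt_4 {n : ℕ} (A M₁ N₁ φ φ₁ φ₂ G : Matrix (Fin n) (Fin n) ℝ)
    (q : Fin n → ℝ) (ψ : (Fin n → ℝ) → (Fin n → ℝ))
    (hsplit : A = (M₁ + φ) - (N₁ + φ))
    (hφ : φ.IsDiag) (hφ₁ : PosDiag φ₁) (hφ₂ : PosDiag φ₂)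
    (hns : IsUnit (φ₁ * M₁ + φ₁ * φ + φ₂).det)
    (hG : ∀ i j, 0 ≤ G i j)
    (hψ : ∀ x y : Fin n → ℝ, ∀ i, |ψ x i - ψ y i| ≤ (G *ᵥ vecAbs (x - y)) i)
    (hρ : specRad (matAbs ((φ₁ * M₁ + φ₁ * φ + φ₂)⁻¹) *
      (matAbs (φ₁ * N₁ + φ₁ * φ) + matAbs (φ₁ * A - φ₂) + 2 • (φ₂ * G))) < 1)
    (zstar : Fin n → ℝ) (hz : ICPsol A q ψ zstar)
    (z : ℕ → Fin n → ℝ)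
    (hit : ∀ k, z (k + 1) = (φ₁ * M₁ + φ₁ * φ + φ₂)⁻¹ *ᵥ
      ((φ₁ * N₁ + φ₁ * φ) *ᵥ z k +
        vecAbs ((φ₁ * A - φ₂) *ᵥ z k + φ₁ *ᵥ q + φ₂ *ᵥ ψ (z k)) -
        φ₁ *ᵥ q + φ₂ *ᵥ ψ (z k))) :
    Filter.Tendsto z Filter.atTop (nhds zstar) ∧
      ∀ w : Fin n → ℝ, ICPsol A q ψ w → w = zstar :=
  stmt_4_general A M₁ N₁ φ φ₁ φ₂ G q ψ hsplit hφ₁ hφ₂ hns hG hψ hρ zstar hz z hit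
end

section
/- Under the hypotheses of Theorem 4.2 (A = (a_ij) an H₊-matrix, A = (M₁+φ) − (N₁+φ) an H-splitting, φ₂ ≥ D_{φ₁} = φ₁·diag(A), and G = (g_ij) ≥ 0 with g_ii ≤ (w_ii|n_ii + φ_ii| − (w_ii n_ii + |w_ii φ_ii|))/(2ξ_ii) and g_ij ≤ (|w_ii m_ij| + |w_ii n_ij| − |w_ii a_ij|)/(2ξ_ii) for i ≠ j, where φ₁ = diag(w_ii), φ₂ = diag(ξ_ii), φ = diag(φ_ii), M₁ = (m_ij), N₁ = (n_ij)), the matrix ⟨M_{φ₁}⟩ + |φ_{φ₁}| + φ₂ − |N_{φ₁}+φ_{φ₁}| − |A_{φ₁}−φ₂| − 2φ₂G is a nonsingular M-matrix. -/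
open Matrix Finset

lemma diag_mul_apply {n : ℕ} {D X : Matrix (Fin n) (Fin n) ℝ} (hD : D.IsDiag)
    (i j : Fin n) : (D * X) i j = D i i * X i j := by
  rw [Matrix.mul_apply, Finset.sum_eq_single i]
  · intro b _ hb
    rw [hD (Ne.symm hb), zero_mul]
  · intro h
    exact absurd (Finset.mem_univ i) h

lemma mulVec_nonneg_imp {n : ℕ} (C : Matrix (Fin n) (Fin n) ℝ) (x : Fin n → ℝ)
    (hx : ∀ i, 0 < x i) (hZ : ZMat C) (hCx : ∀ i, 0 < (C *ᵥ x) i)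
    (y : Fin n → ℝ) (hy : ∀ i, 0 ≤ (C *ᵥ y) i) : ∀ i, 0 ≤ y i := by
  by_contra h
  push_neg at h
  obtain ⟨k, hk⟩ := h
  obtain ⟨i, -, hi⟩ := Finset.exists_min_image Finset.univ (fun j => y j / x j)
    ⟨k, Finset.mem_univ k⟩
  set α := y i / x i with hαdef
  have hα : α < 0 := lt_of_le_of_lt (hi k (Finset.mem_univ k))
    (div_neg_of_neg_of_pos hk (hx k))
  have key : (C *ᵥ y) i ≤ α * (C *ᵥ x) i := by
    have h1 : ∀ j, C i j * y j ≤ C i j * (α * x j) := by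
      intro j
      by_cases hij : i = j
      · subst hij
        have : y i = α * x i := (div_mul_cancel₀ (y i) (ne_of_gt (hx i))).symm
        rw [← this]
      · have hC := hZ i j hij
        have hxy : α * x j ≤ y j := by
          have := hi j (Finset.mem_univ j)
          calc α * x j ≤ (y j / x j) * x j := by
                exact mul_le_mul_of_nonneg_right this (le_of_lt (hx j))
            _ = y j := div_mul_cancel₀ (y j) (ne_of_gt (hx j))
        nlinarith
    have h2 : (C *ᵥ y) i ≤ ∑ j, C i j * (α * x j) := by
      simp only [mulVec, dotProduct]
      exact Finset.sum_le_sum fun j _ => h1 j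
    have h3 : ∑ j, C i j * (α * x j) = α * (C *ᵥ x) i := by
      simp only [mulVec, dotProduct, Finset.mul_sum]
      congr 1; ext j; ring
    linarith
  have := mul_neg_of_neg_of_pos hα (hCx i)
  linarith [hy i]

lemma zmat_pos_vec_Mmatrix {n : ℕ} (C : Matrix (Fin n) (Fin n) ℝ) (x : Fin n → ℝ)
    (hx : ∀ i, 0 < x i) (hZ : ZMat C) (hCx : ∀ i, 0 < (C *ᵥ x) i) :
    NonsingularMMatrix C := by
  have hinj : ∀ y, C *ᵥ y = 0 → y = 0 := by
    intro y hy
    have h1 : ∀ i, 0 ≤ y i := mulVec_nonneg_imp C x hx hZ hCx y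
      (by rw [hy]; intro i; simp)
    have h2 : ∀ i, 0 ≤ (-y) i := mulVec_nonneg_imp C x hx hZ hCx (-y)
      (by rw [Matrix.mulVec_neg, hy]; intro i; simp)
    funext i
    have := h2 i
    simp only [Pi.neg_apply, Pi.zero_apply] at this ⊢
    linarith [h1 i]
  have hdet : IsUnit C.det := by
    rw [isUnit_iff_ne_zero]
    intro hd
    obtain ⟨v, hv, hv0⟩ := (Matrix.exists_mulVec_eq_zero_iff).2 hd
    exact hv (hinj v hv0)
  refine ⟨hZ, hdet, ?_⟩
  intro i j
  have hcol : C *ᵥ (C⁻¹ *ᵥ Pi.single j 1) = Pi.single j 1 := by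
    rw [Matrix.mulVec_mulVec, Matrix.mul_nonsing_inv C hdet, Matrix.one_mulVec]
  have hnn := mulVec_nonneg_imp C x hx hZ hCx (C⁻¹ *ᵥ Pi.single j 1)
    (by rw [hcol]; intro i'; by_cases h : i' = j <;> simp [h, Pi.single_apply])
  have := hnn i
  simpa [Matrix.mulVec_single] using this

lemma Mmatrix_pos_vec {n : ℕ} (B : Matrix (Fin n) (Fin n) ℝ)
    (hB : NonsingularMMatrix B) :
    ∃ x : Fin n → ℝ, (∀ i, 0 < x i) ∧ ∀ i, 0 < (B *ᵥ x) i := by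
  obtain ⟨hZ, hdet, hinv⟩ := hB
  refine ⟨B⁻¹ *ᵥ (fun _ => 1), ?_, ?_⟩
  · intro i
    have hrow : ∃ k, B⁻¹ i k ≠ 0 := by
      by_contra h
      push_neg at h
      have h1 : (B⁻¹ * B) i i = 1 := by
        rw [Matrix.nonsing_inv_mul B hdet]; simp
      simp only [Matrix.mul_apply] at h1
      rw [Finset.sum_eq_zero (fun k _ => by rw [h k, zero_mul])] at h1
      norm_num at h1
    obtain ⟨k, hk⟩ := hrow
    simp only [mulVec, dotProduct, mul_one]
    exact Finset.sum_pos' (fun j _ => hinv i j)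
      ⟨k, Finset.mem_univ k, lt_of_le_of_ne (hinv i k) (Ne.symm hk)⟩
  · intro i
    rw [Matrix.mulVec_mulVec, Matrix.mul_nonsing_inv B hdet, Matrix.one_mulVec]
    norm_num

lemma Mmatrix_diag_pos {n : ℕ} (B : Matrix (Fin n) (Fin n) ℝ)
    (hB : NonsingularMMatrix B) : ∀ i, 0 < B i i := by
  obtain ⟨hZ, hdet, hinv⟩ := hB
  intro i
  have h1 : (B * B⁻¹) i i = 1 := by rw [Matrix.mul_nonsing_inv B hdet]; simp
  simp only [Matrix.mul_apply] at h1
  have h2 : ∑ k ∈ Finset.univ, B i k * B⁻¹ k i ≤ B i i * B⁻¹ i i := by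
    rw [← Finset.add_sum_erase _ _ (Finset.mem_univ i)]
    have : ∑ k ∈ Finset.univ.erase i, B i k * B⁻¹ k i ≤ 0 := by
      apply Finset.sum_nonpos
      intro k hk
      have hki : k ≠ i := (Finset.mem_erase.1 hk).1
      exact mul_nonpos_of_nonpos_of_nonneg (hZ i k (Ne.symm hki)) (hinv k i)
    linarith
  nlinarith [hinv i i]

/-- under the hypotheses of Theorem 4.2,
⟨M_{φ₁}⟩ + |φ_{φ₁}| + φ₂ − |N_{φ₁}+φ_{φ₁}| − |A_{φ₁}−φ₂| − 2φ₂G is a nonsingular M-matrix. -/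
theorem stmt_7 {n : ℕ} (A M₁ N₁ φ φ₁ φ₂ G : Matrix (Fin n) (Fin n) ℝ)
    (hA : HplusMatrix A)
    (hsplit : A = (M₁ + φ) - (N₁ + φ))
    (hHsplit : NonsingularMMatrix (cmpMat (M₁ + φ) - matAbs (N₁ + φ)))
    (hφ : φ.IsDiag) (hφ₁ : PosDiag φ₁) (hφ₂ : PosDiag φ₂)
    (hφ₂D : ∀ i j, (φ₁ * Matrix.diagonal A.diag) i j ≤ φ₂ i j)
    (hG : ∀ i j, 0 ≤ G i j)
    (hGdiag : ∀ i, G i i ≤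
      (φ₁ i i * |N₁ i i + φ i i| - (φ₁ i i * N₁ i i + |φ₁ i i * φ i i|)) / (2 * φ₂ i i))
    (hGoff : ∀ i j, i ≠ j → G i j ≤
      (|φ₁ i i * M₁ i j| + |φ₁ i i * N₁ i j| - |φ₁ i i * A i j|) / (2 * φ₂ i i)) :
    NonsingularMMatrix (cmpMat (φ₁ * M₁) + matAbs (φ₁ * φ) + φ₂ -
      matAbs (φ₁ * N₁ + φ₁ * φ) - matAbs (φ₁ * A - φ₂) - 2 • (φ₂ * G)) := by
  set B : Matrix (Fin n) (Fin n) ℝ := cmpMat (M₁ + φ) - matAbs (N₁ + φ) with hB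
  obtain ⟨x, hxpos, hBx⟩ := Mmatrix_pos_vec B hHsplit
  set C : Matrix (Fin n) (Fin n) ℝ := cmpMat (φ₁ * M₁) + matAbs (φ₁ * φ) + φ₂ -
      matAbs (φ₁ * N₁ + φ₁ * φ) - matAbs (φ₁ * A - φ₂) - 2 • (φ₂ * G) with hC
  have hφoff : ∀ i j : Fin n, i ≠ j → φ i j = 0 := fun i j h => hφ h
  have hφ₂off : ∀ i j : Fin n, i ≠ j → φ₂ i j = 0 := fun i j h => hφ₂.1 h
  have hAMN : ∀ i j, A i j = M₁ i j - N₁ i j := by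
    intro i j
    rw [hsplit]
    simp [Matrix.sub_apply, Matrix.add_apply]
  have hBdiagpos := Mmatrix_diag_pos B hHsplit
  -- off-diagonal entries of C, simplified
  have hCoff : ∀ i j : Fin n, i ≠ j →
      C i j = -|φ₁ i i * M₁ i j| - |φ₁ i i * N₁ i j| - |φ₁ i i * A i j|
        - 2 * (φ₂ i i * G i j) := by
    intro i j hij
    simp only [hC, Matrix.sub_apply, Matrix.add_apply, Matrix.smul_apply, smul_eq_mul,
      cmpMat, matAbs, if_neg hij, diag_mul_apply hφ₁.1, diag_mul_apply hφ₂.1,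
      hφoff i j hij, hφ₂off i j hij, mul_zero, add_zero, abs_zero]
    ring
  have hgoff : ∀ i j : Fin n, i ≠ j → 2 * (φ₂ i i * G i j) ≤
      |φ₁ i i * M₁ i j| + |φ₁ i i * N₁ i j| - |φ₁ i i * A i j| := by
    intro i j hij
    have hξ : (0:ℝ) < 2 * φ₂ i i := by linarith [hφ₂.2 i]
    have h := mul_le_mul_of_nonneg_left (hGoff i j hij) hξ.le
    rw [mul_div_cancel₀ _ (ne_of_gt hξ)] at h
    linarith
  have hZC : ZMat C := by
    intro i j hij
    rw [hCoff i j hij]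
    have h1 := hG i j
    have h2 := hφ₂.2 i
    nlinarith [abs_nonneg (φ₁ i i * M₁ i j), abs_nonneg (φ₁ i i * N₁ i j),
      abs_nonneg (φ₁ i i * A i j)]
  have hkey : ∀ i j, 2 * φ₁ i i * B i j ≤ C i j := by
    intro i j
    have hw : 0 < φ₁ i i := hφ₁.2 i
    have hξ : 0 < φ₂ i i := hφ₂.2 i
    by_cases hij : i = j
    · subst hij
      have hBd : B i i = |M₁ i i + φ i i| - |N₁ i i + φ i i| := by
        simp [hB, cmpMat, matAbs, Matrix.sub_apply, Matrix.add_apply]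
      have hCd : C i i = |φ₁ i i * M₁ i i| + |φ₁ i i * φ i i| + φ₂ i i
          - |φ₁ i i * N₁ i i + φ₁ i i * φ i i| - |φ₁ i i * A i i - φ₂ i i|
          - 2 * (φ₂ i i * G i i) := by
        simp only [hC, Matrix.sub_apply, Matrix.add_apply, Matrix.smul_apply, smul_eq_mul,
          cmpMat, matAbs, if_pos rfl, if_true,
          diag_mul_apply hφ₁.1, diag_mul_apply hφ₂.1]
        ring
      have ha : A i i = M₁ i i - N₁ i i := hAMN i i
      have hapos : 0 < A i i := hA.2 i
      have haξ : φ₁ i i * A i i ≤ φ₂ i i := by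
        have h := hφ₂D i i
        rwa [diag_mul_apply hφ₁.1, Matrix.diagonal_apply_eq, Matrix.diag] at h
      have habs : |φ₁ i i * A i i - φ₂ i i| = φ₂ i i - φ₁ i i * A i i := by
        rw [abs_of_nonpos (by linarith)]
        ring
      have hg : 2 * (φ₂ i i * G i i) ≤ φ₁ i i * |N₁ i i + φ i i|
          - (φ₁ i i * N₁ i i + |φ₁ i i * φ i i|) := by
        have hξ2 : (0:ℝ) < 2 * φ₂ i i := by linarith
        have h := mul_le_mul_of_nonneg_left (hGdiag i) hξ2.le
        rw [mul_div_cancel₀ _ (ne_of_gt hξ2)] at h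
        linarith
      have hBp : 0 < |M₁ i i + φ i i| - |N₁ i i + φ i i| := by
        have := hBdiagpos i
        rwa [hBd] at this
      have hmφ : 0 ≤ M₁ i i + φ i i := by
        by_contra hneg
        push_neg at hneg
        have h1 : N₁ i i + φ i i < M₁ i i + φ i i := by nlinarith
        rw [abs_of_neg hneg, abs_of_neg (lt_trans h1 hneg)] at hBp
        linarith
      rw [hBd, hCd, habs, abs_of_nonneg hmφ]
      have e1 : |φ₁ i i * M₁ i i| = φ₁ i i * |M₁ i i| := by
        rw [abs_mul, abs_of_pos hw]
      have e2 : |φ₁ i i * φ i i| = φ₁ i i * |φ i i| := by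
        rw [abs_mul, abs_of_pos hw]
      have e3 : |φ₁ i i * N₁ i i + φ₁ i i * φ i i| = φ₁ i i * |N₁ i i + φ i i| := by
        rw [← mul_add, abs_mul, abs_of_pos hw]
      rw [e2] at hg
      rw [e1, e2, e3]
      nlinarith [mul_le_mul_of_nonneg_left (le_abs_self (M₁ i i)) hw.le,
        mul_le_mul_of_nonneg_left (le_abs_self (φ i i)) hw.le]
    · have hBo : B i j = -|M₁ i j| - |N₁ i j| := by
        simp [hB, cmpMat, matAbs, Matrix.sub_apply, Matrix.add_apply, if_neg hij,
          hφoff i j hij]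
      rw [hCoff i j hij, hBo]
      have hg := hgoff i j hij
      have e1 : |φ₁ i i * M₁ i j| = φ₁ i i * |M₁ i j| := by
        rw [abs_mul, abs_of_pos hw]
      have e2 : |φ₁ i i * N₁ i j| = φ₁ i i * |N₁ i j| := by
        rw [abs_mul, abs_of_pos hw]
      rw [e1, e2] at hg
      rw [e1, e2]
      nlinarith [abs_nonneg (φ₁ i i * A i j)]
  apply zmat_pos_vec_Mmatrix C x hxpos hZC
  intro i
  have hw : 0 < φ₁ i i := hφ₁.2 i
  have h1 : 2 * φ₁ i i * (B *ᵥ x) i ≤ (C *ᵥ x) i := by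
    simp only [Matrix.mulVec, dotProduct, Finset.mul_sum]
    apply Finset.sum_le_sum
    intro j _
    calc 2 * φ₁ i i * (B i j * x j) = (2 * φ₁ i i * B i j) * x j := by ring
      _ ≤ C i j * x j := mul_le_mul_of_nonneg_right (hkey i j) (hxpos j).le
  have h2 : 0 < 2 * φ₁ i i * (B *ᵥ x) i := by
    have := hBx i
    positivity
  linarith
end

section
/- Let A ∈ ℝ^{n×n} be an H₊-matrix, A = D₁ − L₁ − U₁ with D₁ = diag(A), L₁, U₁ the strictly lower and upper triangular parts, B = L₁ + U₁, and let θ₁ > 0, θ₂ ≥ 0. For the AOR splitting M₁ = (1/θ₁)(D₁ − θ₂L₁), N₁ = (1/θ₁)((1−θ₁)D₁ + (θ₁−θ₂)L₁ + θ₁U₁) and positive diagonal φ₁, φ₂ with φ₂ ≥ D_{φ₁} = φ₁D₁, a diagonal φ and a nonnegative matrix G, setting H̄ = ⟨M_{φ₁}⟩ + |φ_{φ₁}| + φ₂ and F̄ = |N_{φ₁}+φ_{φ₁}| + |A_{φ₁}−φ₂| + 2φ₂G, one has the entrywise inequality θ₁(H̄ − F̄) ≥ 2D_{φ₁}(min{1,θ₁}·I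 − max{θ₁,θ₂}·D_{φ₁}⁻¹(|B_{φ₁}| + φ₂G)), where B_{φ₁} = φ₁B. -/
open Matrix Finset

/-- the entrywise inequality on θ₁(H̄ − F̄) for the AOR splitting. -/
theorem stmt_9 {n : ℕ} (A D₁ L₁ U₁ B M₁ N₁ φ φ₁ φ₂ G : Matrix (Fin n) (Fin n) ℝ)
    (θ₁ θ₂ : ℝ)
    (hA : HplusMatrix A)
    (hD : D₁ = Matrix.diagonal A.diag)
    (hL : ∀ i j : Fin n, (i : ℕ) ≤ (j : ℕ) → L₁ i j = 0)
    (hU : ∀ i j : Fin n, (j : ℕ) ≤ (i : ℕ) → U₁ i j = 0)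
    (hdec : A = D₁ - L₁ - U₁)
    (hB : B = L₁ + U₁)
    (hθ₁ : 0 < θ₁) (hθ₂ : 0 ≤ θ₂)
    (hφ : φ.IsDiag) (hφ₁ : PosDiag φ₁) (hφ₂ : PosDiag φ₂)
    (hφ₂D : ∀ i j, (φ₁ * D₁) i j ≤ φ₂ i j)
    (hG : ∀ i j, 0 ≤ G i j)
    (hM : M₁ = θ₁⁻¹ • (D₁ - θ₂ • L₁))
    (hN : N₁ = θ₁⁻¹ • ((1 - θ₁) • D₁ + (θ₁ - θ₂) • L₁ + θ₁ • U₁)) :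
    ∀ i j,
      (2 • ((φ₁ * D₁) *
          (min 1 θ₁ • (1 : Matrix (Fin n) (Fin n) ℝ) -
            max θ₁ θ₂ • ((φ₁ * D₁)⁻¹ * (matAbs (φ₁ * B) + φ₂ * G))))) i j ≤
      (θ₁ • ((cmpMat (φ₁ * M₁) + matAbs (φ₁ * φ) + φ₂) -
          (matAbs (φ₁ * N₁ + φ₁ * φ) + matAbs (φ₁ * A - φ₂) + 2 • (φ₂ * G)))) i j := by

  obtain ⟨hφ₁diag, hφ₁pos⟩ := hφ₁
  obtain ⟨hφ₂diag, hφ₂pos⟩ := hφ₂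
  have hAdiag : ∀ i, 0 < A i i := hA.2
  set d : Fin n → ℝ := fun i => φ₁ i i * A i i with hdd
  have hdpos : ∀ i, 0 < d i := fun i => mul_pos (hφ₁pos i) (hAdiag i)
  have hmul1 : ∀ (X : Matrix (Fin n) (Fin n) ℝ) i j, (φ₁ * X) i j = φ₁ i i * X i j := by
    intro X i j
    conv_lhs => rw [← hφ₁diag.diagonal_diag]
    rw [Matrix.diagonal_mul]
    rfl
  have hmul2 : ∀ (X : Matrix (Fin n) (Fin n) ℝ) i j, (φ₂ * X) i j = φ₂ i i * X i j := by
    intro X i j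
    conv_lhs => rw [← hφ₂diag.diagonal_diag]
    rw [Matrix.diagonal_mul]
    rfl
  have hPD : φ₁ * D₁ = Matrix.diagonal d := by
    ext i j
    rw [hmul1, hD, Matrix.diagonal_apply, Matrix.diagonal_apply]
    split
    · rfl
    · exact mul_zero _
  have hdet : IsUnit (φ₁ * D₁).det := by
    rw [hPD, Matrix.det_diagonal]
    exact (Finset.prod_pos (fun i _ => hdpos i)).ne'.isUnit
  have hinv : (φ₁ * D₁) * ((φ₁ * D₁)⁻¹ * (matAbs (φ₁ * B) + φ₂ * G))
      = matAbs (φ₁ * B) + φ₂ * G := by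
    rw [← Matrix.mul_assoc, Matrix.mul_nonsing_inv _ hdet, Matrix.one_mul]
  have hLHS : (2 • ((φ₁ * D₁) * (min 1 θ₁ • (1 : Matrix (Fin n) (Fin n) ℝ) -
      max θ₁ θ₂ • ((φ₁ * D₁)⁻¹ * (matAbs (φ₁ * B) + φ₂ * G)))))
      = 2 • (min 1 θ₁ • (φ₁ * D₁) - max θ₁ θ₂ • (matAbs (φ₁ * B) + φ₂ * G)) := by
    rw [Matrix.mul_sub, Matrix.mul_smul, Matrix.mul_one, Matrix.mul_smul, hinv]
  intro i j
  rw [hLHS]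
  have hmaxθ : θ₁ ≤ max θ₁ θ₂ := le_max_left _ _
  have hGij : 0 ≤ φ₂ i i * G i j := mul_nonneg (hφ₂pos i).le (hG i j)
  have hMij : M₁ i j = θ₁⁻¹ * (D₁ i j - θ₂ * L₁ i j) := by
    rw [hM]; simp [Matrix.smul_apply, Matrix.sub_apply, smul_eq_mul]
  have hNij : N₁ i j = θ₁⁻¹ * ((1 - θ₁) * D₁ i j + (θ₁ - θ₂) * L₁ i j + θ₁ * U₁ i j) := by
    rw [hN]; simp [Matrix.smul_apply, Matrix.add_apply, smul_eq_mul]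
  have hAij : A i j = D₁ i j - L₁ i j - U₁ i j := by rw [hdec]; simp
  have hBij : B i j = L₁ i j + U₁ i j := by rw [hB]; simp
  have h2 : ∀ (X : Matrix (Fin n) (Fin n) ℝ) (i j : Fin n), (2 • X) i j = 2 * X i j := by
    intro X i j; simp
  rcases eq_or_ne i j with rfl | hij
  · -- diagonal case
    have hDii : D₁ i i = A i i := by rw [hD]; simp [Matrix.diag]
    have hL0 : L₁ i i = 0 := hL i i le_rfl
    have hU0 : U₁ i i = 0 := hU i i le_rfl
    simp only [h2, Matrix.smul_apply, Matrix.sub_apply, Matrix.add_apply, matAbs, cmpMat,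
      hmul1, hmul2, smul_eq_mul, eq_self_iff_true, if_true]
    rw [hMij, hNij, hBij, hAij, hDii, hL0, hU0]
    simp only [mul_zero, add_zero, sub_zero, zero_add, abs_zero]
    have hla : 0 < φ₁ i i * A i i := mul_pos (hφ₁pos i) (hAdiag i)
    have hpd : φ₁ i i * A i i ≤ φ₂ i i := by
      have := hφ₂D i i
      rwa [hmul1, hDii] at this
    have E1 : |φ₁ i i * (θ₁⁻¹ * A i i)| = θ₁⁻¹ * (φ₁ i i * A i i) := by
      rw [abs_of_pos (mul_pos (hφ₁pos i) (mul_pos (inv_pos.2 hθ₁) (hAdiag i)))]; ring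
    have E2 : |φ₁ i i * (θ₁⁻¹ * ((1 - θ₁) * A i i)) + φ₁ i i * φ i i|
        = θ₁⁻¹ * |(1 - θ₁) * (φ₁ i i * A i i) + θ₁ * (φ₁ i i * φ i i)| := by
      nth_rewrite 2 [← abs_of_pos (inv_pos.2 hθ₁)]
      rw [← abs_mul]
      congr 1
      field_simp
    have E3 : |φ₁ i i * A i i - φ₂ i i| = φ₂ i i - φ₁ i i * A i i := by
      rw [abs_of_nonpos (by linarith), neg_sub]
    rw [E1, E2, E3]
    have key : θ₁ * (θ₁⁻¹ * (φ₁ i i * A i i) + |φ₁ i i * φ i i| + φ₂ i i -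
        (θ₁⁻¹ * |(1 - θ₁) * (φ₁ i i * A i i) + θ₁ * (φ₁ i i * φ i i)| +
          (φ₂ i i - φ₁ i i * A i i) + 2 * (φ₂ i i * G i i)))
        = φ₁ i i * A i i + θ₁ * |φ₁ i i * φ i i| + θ₁ * φ₂ i i -
          |(1 - θ₁) * (φ₁ i i * A i i) + θ₁ * (φ₁ i i * φ i i)| -
          θ₁ * (φ₂ i i - φ₁ i i * A i i) - 2 * (θ₁ * (φ₂ i i * G i i)) := by
      field_simp
      ring
    rw [key]
    have E4 : |(1 - θ₁) * (φ₁ i i * A i i) + θ₁ * (φ₁ i i * φ i i)|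
        ≤ |1 - θ₁| * (φ₁ i i * A i i) + θ₁ * |φ₁ i i * φ i i| := by
      calc |(1 - θ₁) * (φ₁ i i * A i i) + θ₁ * (φ₁ i i * φ i i)|
          ≤ |(1 - θ₁) * (φ₁ i i * A i i)| + |θ₁ * (φ₁ i i * φ i i)| := abs_add_le _ _
        _ = |1 - θ₁| * (φ₁ i i * A i i) + θ₁ * |φ₁ i i * φ i i| := by
            rw [abs_mul (1 - θ₁), abs_mul θ₁, abs_of_pos hla, abs_of_pos hθ₁]
    have E5 : 2 * (min 1 θ₁) * (φ₁ i i * A i i)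
        = (1 + θ₁ - |1 - θ₁|) * (φ₁ i i * A i i) := by
      rcases le_total θ₁ 1 with h | h
      · rw [min_eq_right h, abs_of_nonneg (by linarith)]; ring
      · rw [min_eq_left h, abs_of_nonpos (by linarith)]; ring
    have E6 : θ₁ * (φ₂ i i * G i i) ≤ max θ₁ θ₂ * (φ₂ i i * G i i) :=
      mul_le_mul_of_nonneg_right (le_max_left _ _) hGij
    nlinarith [E4, E5, E6]
  · -- off-diagonal case
    have hDij : D₁ i j = 0 := by rw [hD]; exact Matrix.diagonal_apply_ne _ hij
    have hφij : φ i j = 0 := hφ hij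
    have hφ₂ij : φ₂ i j = 0 := hφ₂diag hij
    simp only [h2, Matrix.smul_apply, Matrix.sub_apply, Matrix.add_apply, matAbs, cmpMat,
      hmul1, hmul2, smul_eq_mul, if_neg hij]
    rw [hMij, hNij, hBij, hAij, hDij, hφij, hφ₂ij]
    simp only [mul_zero, zero_mul, add_zero, sub_zero, zero_add, abs_zero, zero_sub]
    have hij' : (i : ℕ) ≠ (j : ℕ) := fun h => hij (Fin.ext h)
    rcases lt_or_gt_of_ne hij' with h | h
    · have hL0 : L₁ i j = 0 := hL i j h.le
      rw [hL0]
      simp only [mul_zero, zero_mul, add_zero, sub_zero, zero_add, abs_zero, zero_sub,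
        neg_zero, mul_neg, abs_neg, neg_neg]
      have e : φ₁ i i * (θ₁⁻¹ * (θ₁ * U₁ i j)) = φ₁ i i * U₁ i j := by
        field_simp
      rw [e]
      nlinarith [mul_le_mul_of_nonneg_right hmaxθ
        (add_nonneg (abs_nonneg (φ₁ i i * U₁ i j)) hGij)]
    · have hU0 : U₁ i j = 0 := hU i j h.le
      rw [hU0]
      simp only [mul_zero, zero_mul, add_zero, sub_zero, zero_add, abs_zero, zero_sub,
        neg_zero, mul_neg, abs_neg, neg_neg]
      have e1 : θ₁ * |φ₁ i i * (θ₁⁻¹ * (θ₂ * L₁ i j))| = θ₂ * |φ₁ i i * L₁ i j| := by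
        rw [show φ₁ i i * (θ₁⁻¹ * (θ₂ * L₁ i j)) = (θ₁⁻¹ * θ₂) * (φ₁ i i * L₁ i j) by ring,
          abs_mul, abs_of_nonneg (mul_nonneg (inv_pos.2 hθ₁).le hθ₂)]
        field_simp
      have e2 : θ₁ * |φ₁ i i * (θ₁⁻¹ * ((θ₁ - θ₂) * L₁ i j))| = |θ₁ - θ₂| * |φ₁ i i * L₁ i j| := by
        rw [show φ₁ i i * (θ₁⁻¹ * ((θ₁ - θ₂) * L₁ i j)) = (θ₁⁻¹ * (θ₁ - θ₂)) * (φ₁ i i * L₁ i j) by ring,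
          abs_mul, abs_mul, abs_of_pos (inv_pos.2 hθ₁)]
        field_simp
      have e3 : θ₂ + |θ₁ - θ₂| + θ₁ = 2 * max θ₁ θ₂ := by
        rcases le_total θ₁ θ₂ with h' | h'
        · rw [max_eq_right h', abs_of_nonpos (by linarith)]; ring
        · rw [max_eq_left h', abs_of_nonneg (by linarith)]; ring
      nlinarith [e1, e2, e3, abs_nonneg (φ₁ i i * L₁ i j), hGij,
        mul_le_mul_of_nonneg_right hmaxθ hGij,
        mul_nonneg (abs_nonneg (φ₁ i i * L₁ i j)) (abs_nonneg (θ₁ - θ₂))]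
end

section
/- Let A = (M₁+φ) − (N₁+φ) be an H-splitting of an H₊-matrix A ∈ ℝ^{n×n} (i.e. ⟨M₁+φ⟩ − |N₁+φ| is a nonsingular M-matrix), with φ diagonal and φ₁, φ₂ positive diagonal, G ≥ 0 a matrix, and D_{φ₁} = φ₁·diag(A). Let U be a positive diagonal matrix such that (⟨M₁+φ⟩ − |N₁+φ|)U is strictly diagonally dominant, and let e = (1,…,1)ᵀ. If φ₂ ≥ D_{φ₁} and (⟨M_{φ₁}+φ_{φ₁}⟩ − |N_{φ₁}+φ_{φ₁}| − φ₂G)Ue > 0, then ρ(L̄) < 1 for L̄ = (⟨M_{φ₁}⟩ + |φ_{φ₁}| + φ₂)⁻¹(|N_{φ₁}+φ_{φ₁}| + |A_{φ₁}−φ₂| + 2φ₂G), so Method 3.1 is convergent. -/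
open Matrix Finset

/-!
Write `u` for the diagonal of `U`, `W = φ₁M₁ + φ₁φ + φ₂`, and `P`, `Q` for the denominator and the
numerator of `L̄`. All estimates are `u`-weighted row sums. The hypothesis on
`(⟨M_{φ₁}+φ_{φ₁}⟩ − |N_{φ₁}+φ_{φ₁}| − φ₂G)Ue`, together with `φ₂ ≥ D_{φ₁}` and `a_ii > 0`, gives
`Qu < ⟨W⟩u ≤ ⟨P⟩u` row by row, hence `Qu ≤ θ⟨W⟩u` for some `θ < 1`.

If `⟨M⟩u > 0`, a maximising row of `|x_i| / u_i` shows: `|Mx| ≤ Q|y|` and `|y| ≤ Cu` imply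
`|x| ≤ θCu`. For an eigenpair `P⁻¹Qv = λv` (so `P(λv) = Qv`) this gives `|λ| ≤ θ`. For
Method 3.1, `W(z_{k+1} − z*) = F(z_k) − F(z*)` with `|F(y) − F(z*)| ≤ Q|y − z*|`, so the error
decreases like `θ^k`.
-/

namespace Matrix

section WeightedDominance

variable {ι K : Type*} [Fintype ι] [DecidableEq ι] [NormedField K]

def dominanceGap (M : Matrix ι ι K) (w : ι → ℝ) (i : ι) : ℝ :=
  ‖M i i‖ * w i - ∑ j ∈ univ.erase i, ‖M i j‖ * w j

theorem div_mul_dominanceGap_le_norm_mulVec_apply (M : Matrix ι ι K) {w : ι → ℝ}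
    (hw : ∀ j, 0 < w j) {x : ι → K} {i : ι} (hi : ∀ j, ‖x j‖ / w j ≤ ‖x i‖ / w i) :
    ‖x i‖ / w i * dominanceGap M w i ≤ ‖(M *ᵥ x) i‖ := by
  set t := ‖x i‖ / w i
  have hx : ∀ j, ‖x j‖ ≤ t * w j := fun j => (div_le_iff₀ (hw j)).1 (hi j)
  have hxi : ‖x i‖ = t * w i := (div_mul_cancel₀ _ (hw i).ne').symm
  have hsplit : (M *ᵥ x) i = M i i * x i + ∑ j ∈ univ.erase i, M i j * x j :=
    (add_sum_erase _ (fun j => M i j * x j) (mem_univ i)).symm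
  have hoff : ‖∑ j ∈ univ.erase i, M i j * x j‖ ≤ t * ∑ j ∈ univ.erase i, ‖M i j‖ * w j := by
    rw [mul_sum]
    refine (norm_sum_le _ _).trans (sum_le_sum fun j _ => ?_)
    rw [norm_mul, mul_left_comm]
    exact mul_le_mul_of_nonneg_left (hx j) (norm_nonneg _)
  calc t * dominanceGap M w i
      = ‖M i i * x i‖ - t * ∑ j ∈ univ.erase i, ‖M i j‖ * w j := by
        rw [dominanceGap, norm_mul, hxi]; ring
    _ ≤ ‖M i i * x i‖ - ‖∑ j ∈ univ.erase i, M i j * x j‖ := by gcongr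
    _ ≤ ‖(M *ᵥ x) i‖ := by rw [hsplit]; exact norm_sub_le_norm_add _ _

theorem norm_le_of_norm_mulVec_le (M : Matrix ι ι K) {Q : Matrix ι ι ℝ} {w : ι → ℝ} {θ C : ℝ}
    (hw : ∀ j, 0 < w j) (hgap : ∀ i, 0 < dominanceGap M w i) (hQ : ∀ i j, 0 ≤ Q i j)
    (hQw : ∀ i, (Q *ᵥ w) i ≤ θ * dominanceGap M w i) {x y : ι → K}
    (hx : ∀ i, ‖(M *ᵥ x) i‖ ≤ ∑ j, Q i j * ‖y j‖) (hy : ∀ j, ‖y j‖ ≤ C * w j) (k : ι) :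
    ‖x k‖ ≤ θ * C * w k := by
  obtain ⟨i, -, hi⟩ := exists_max_image univ (fun j => ‖x j‖ / w j) ⟨k, mem_univ k⟩
  have hC : 0 ≤ C := nonneg_of_mul_nonneg_left ((norm_nonneg _).trans (hy i)) (hw i)
  have hQy : ∑ j, Q i j * ‖y j‖ ≤ C * (Q *ᵥ w) i := by
    rw [mulVec, dotProduct, mul_sum]
    refine sum_le_sum fun j _ => ?_
    rw [mul_left_comm]
    exact mul_le_mul_of_nonneg_left (hy j) (hQ i j)
  have hmax : ‖x i‖ / w i ≤ θ * C := by
    refine le_of_mul_le_mul_right ?_ (hgap i)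
    calc ‖x i‖ / w i * dominanceGap M w i
        ≤ ‖(M *ᵥ x) i‖ := div_mul_dominanceGap_le_norm_mulVec_apply M hw fun j => hi j (mem_univ j)
      _ ≤ C * (Q *ᵥ w) i := (hx i).trans hQy
      _ ≤ C * (θ * dominanceGap M w i) := mul_le_mul_of_nonneg_left (hQw i) hC
      _ = θ * C * dominanceGap M w i := by ring
  calc ‖x k‖ = ‖x k‖ / w k * w k := (div_mul_cancel₀ _ (hw k).ne').symm
    _ ≤ θ * C * w k := mul_le_mul_of_nonneg_right ((hi k (mem_univ k)).trans hmax) (hw k).le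

theorem isUnit_det_of_dominanceGap_pos (M : Matrix ι ι K) {w : ι → ℝ} (hw : ∀ j, 0 < w j)
    (hgap : ∀ i, 0 < dominanceGap M w i) : IsUnit M.det := by
  rw [isUnit_iff_ne_zero]
  intro hdet
  obtain ⟨v, hv, hMv⟩ := exists_mulVec_eq_zero_iff.2 hdet
  refine hv (funext fun k => norm_le_zero_iff.1 ?_)
  simpa using norm_le_of_norm_mulVec_le M (Q := 0) (θ := 0) (C := 0) (y := 0) hw hgap
    (fun _ _ => le_rfl) (fun i => by simp) (fun i => by simp [hMv]) (fun j => by simp) k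

end WeightedDominance

end Matrix

theorem dominanceGap_map_ofReal {n : ℕ} (M : Matrix (Fin n) (Fin n) ℝ) (w : Fin n → ℝ) :
    dominanceGap (M.map (algebraMap ℝ ℂ)) w = dominanceGap M w := by
  ext i
  simp [dominanceGap]

theorem specRad_inv_mul_le {n : ℕ} (P Q : Matrix (Fin n) (Fin n) ℝ) {w : Fin n → ℝ} {θ : ℝ}
    (hw : ∀ j, 0 < w j) (hgap : ∀ i, 0 < dominanceGap P w i) (hQ : ∀ i j, 0 ≤ Q i j)
    (hQw : ∀ i, (Q *ᵥ w) i ≤ θ * dominanceGap P w i) (hθ : 0 ≤ θ) :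
    specRad (P⁻¹ * Q) ≤ θ := by
  have hP := isUnit_det_of_dominanceGap_pos P hw hgap
  suffices h : ∀ z ∈ spectrum ℂ ((P⁻¹ * Q).map (algebraMap ℝ ℂ)), ‖z‖ ≤ θ by
    rw [specRad, ← ENNReal.toReal_ofReal hθ]
    refine ENNReal.toReal_mono ENNReal.ofReal_ne_top (iSup₂_le fun z hz => ?_)
    rw [ENNReal.le_ofReal_iff_toReal_le ENNReal.coe_ne_top hθ]
    exact h z hz
  intro z hz
  rw [← spectrum_toLin', ← Module.End.hasEigenvalue_iff_mem_spectrum] at hz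
  obtain ⟨v, hv, hv0⟩ := hz.exists_hasEigenvector
  have hLv : (P⁻¹ * Q).map (algebraMap ℝ ℂ) *ᵥ v = z • v := by
    simpa [toLin'_apply] using Module.End.mem_eigenspace_iff.1 hv
  have hPv : P.map (algebraMap ℝ ℂ) *ᵥ (z • v) = Q.map (algebraMap ℝ ℂ) *ᵥ v := by
    rw [← hLv, mulVec_mulVec, ← Matrix.map_mul, ← mul_assoc, mul_nonsing_inv _ hP, one_mul]
  obtain ⟨k, hk⟩ := Function.ne_iff.1 hv0
  obtain ⟨i, -, hi⟩ := exists_max_image univ (fun j => ‖v j‖ / w j) ⟨k, mem_univ k⟩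
  have hvi : 0 < ‖v i‖ := by
    have := (div_pos (norm_pos_iff.2 hk) (hw k)).trans_le (hi k (mem_univ k))
    exact (div_pos_iff_of_pos_right (hw i)).1 this
  have hQv : ∀ j, ‖(Q.map (algebraMap ℝ ℂ) *ᵥ v) j‖ ≤ ∑ l, Q j l * ‖v l‖ := fun j => by
    rw [mulVec, dotProduct]
    exact (norm_sum_le _ _).trans_eq (sum_congr rfl fun l _ => by
      simp [abs_of_nonneg (hQ j l)])
  rw [← dominanceGap_map_ofReal] at hgap hQw
  have hzv := norm_le_of_norm_mulVec_le _ (C := ‖v i‖ / w i) hw hgap hQ hQw (x := z • v) (y := v)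
    (fun j => hPv ▸ hQv j) (fun j => (div_le_iff₀ (hw j)).1 (hi j (mem_univ j))) i
  rw [Pi.smul_apply, smul_eq_mul, norm_mul, mul_assoc, div_mul_cancel₀ _ (hw i).ne'] at hzv
  exact le_of_mul_le_mul_right hzv hvi

theorem abs_mulVec_apply_le {n : ℕ} (M : Matrix (Fin n) (Fin n) ℝ) (v : Fin n → ℝ) (i : Fin n) :
    |(M *ᵥ v) i| ≤ (matAbs M *ᵥ vecAbs v) i :=
  (abs_sum_le_sum_abs (fun j => M i j * v j) univ).trans_eq (sum_congr rfl fun _ _ => abs_mul _ _)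

theorem mulVec_apply_nonneg {ι : Type*} [Fintype ι] {M : Matrix ι ι ℝ} {v : ι → ℝ}
    (hM : ∀ i j, 0 ≤ M i j) (hv : ∀ j, 0 ≤ v j) (i : ι) : 0 ≤ (M *ᵥ v) i := by
  rw [mulVec, dotProduct]
  exact sum_nonneg fun j _ => mul_nonneg (hM i j) (hv j)

theorem dominanceGap_eq_cmpMat_mulVec {n : ℕ} (M : Matrix (Fin n) (Fin n) ℝ) (w : Fin n → ℝ)
    (i : Fin n) : dominanceGap M w i = (cmpMat M *ᵥ w) i := by
  rw [dominanceGap, mulVec, dotProduct, ← add_sum_erase _ _ (mem_univ i), sub_eq_add_neg,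
    ← sum_neg_distrib]
  congr 1
  · simp [cmpMat, Real.norm_eq_abs]
  · refine sum_congr rfl fun j hj => ?_
    simp [cmpMat, (ne_of_mem_erase hj).symm, Real.norm_eq_abs]

theorem diag_pos_of_mulVec_pos {n : ℕ} {R : Matrix (Fin n) (Fin n) ℝ} (hR : ZMat R)
    {w : Fin n → ℝ} (hw : ∀ j, 0 < w j) {i : Fin n} (h : 0 < (R *ᵥ w) i) : 0 < R i i := by
  rw [mulVec, dotProduct, ← add_sum_erase _ _ (mem_univ i)] at h
  have hoff : ∑ j ∈ univ.erase i, R i j * w j ≤ 0 :=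
    sum_nonpos fun j hj =>
      mul_nonpos_of_nonpos_of_nonneg (hR i j (ne_of_mem_erase hj).symm) (hw j).le
  exact pos_of_mul_pos_left (by linarith) (hw i).le

/-- The right-hand side of Method 3.1: the iterate is `z (k + 1) = W⁻¹ *ᵥ modulusRhs … (z k)`
with `W = φ₁ * M₁ + φ₁ * φ + φ₂`, `N = φ₁ * N₁ + φ₁ * φ`, `B = φ₁ * A - φ₂`. -/
def modulusRhs {n : ℕ} (N B D₁ D₂ : Matrix (Fin n) (Fin n) ℝ) (q : Fin n → ℝ)
    (ψ : (Fin n → ℝ) → Fin n → ℝ) (y : Fin n → ℝ) : Fin n → ℝ :=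
  N *ᵥ y + vecAbs (B *ᵥ y + D₁ *ᵥ q + D₂ *ᵥ ψ y) - D₁ *ᵥ q + D₂ *ᵥ ψ y

theorem abs_modulusRhs_sub_le {n : ℕ} (N B D₁ G : Matrix (Fin n) (Fin n) ℝ) {d₂ : Fin n → ℝ}
    (hd₂ : ∀ i, 0 ≤ d₂ i) (q : Fin n → ℝ) {ψ : (Fin n → ℝ) → Fin n → ℝ}
    (hψ : ∀ x y : Fin n → ℝ, ∀ i, |ψ x i - ψ y i| ≤ (G *ᵥ vecAbs (x - y)) i)
    (y y' : Fin n → ℝ) (i : Fin n) :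
    |modulusRhs N B D₁ (diagonal d₂) q ψ y i - modulusRhs N B D₁ (diagonal d₂) q ψ y' i| ≤
      ((matAbs N + matAbs B + 2 • (diagonal d₂ * G)) *ᵥ vecAbs (y - y')) i := by
  have hN := abs_mulVec_apply_le N (y - y') i
  have hB := abs_mulVec_apply_le B (y - y') i
  have hψi : |d₂ i * (ψ y i - ψ y' i)| ≤ d₂ i * (G *ᵥ vecAbs (y - y')) i := by
    rw [abs_mul, abs_of_nonneg (hd₂ i)]
    exact mul_le_mul_of_nonneg_left (hψ y y' i) (hd₂ i)
  have habs : |(|(B *ᵥ y + D₁ *ᵥ q + diagonal d₂ *ᵥ ψ y) i| -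
      |(B *ᵥ y' + D₁ *ᵥ q + diagonal d₂ *ᵥ ψ y') i|)| ≤
      |(B *ᵥ (y - y')) i + d₂ i * (ψ y i - ψ y' i)| := by
    refine (abs_abs_sub_abs_le_abs_sub _ _).trans_eq (congrArg _ ?_)
    simp only [Pi.add_apply, mulVec_sub, Pi.sub_apply, mulVec_diagonal]
    ring
  have hsum := abs_add_le ((B *ᵥ (y - y')) i) (d₂ i * (ψ y i - ψ y' i))
  have hdiff : modulusRhs N B D₁ (diagonal d₂) q ψ y i - modulusRhs N B D₁ (diagonal d₂) q ψ y' i =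
      (N *ᵥ (y - y')) i + (|(B *ᵥ y + D₁ *ᵥ q + diagonal d₂ *ᵥ ψ y) i| -
        |(B *ᵥ y' + D₁ *ᵥ q + diagonal d₂ *ᵥ ψ y') i|) + d₂ i * (ψ y i - ψ y' i) := by
    simp only [modulusRhs, vecAbs, Pi.add_apply, Pi.sub_apply, mulVec_sub, mulVec_diagonal]
    ring
  have hQ : ((matAbs N + matAbs B + 2 • (diagonal d₂ * G)) *ᵥ vecAbs (y - y')) i =
      (matAbs N *ᵥ vecAbs (y - y')) i + (matAbs B *ᵥ vecAbs (y - y')) i +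
        2 * (d₂ i * (G *ᵥ vecAbs (y - y')) i) := by
    simp only [add_mulVec, smul_mulVec, ← mulVec_mulVec, Pi.add_apply, Pi.smul_apply,
      mulVec_diagonal]
    rw [nsmul_eq_mul, Nat.cast_ofNat]
  rw [hdiff, hQ, abs_le]
  constructor <;> linarith [abs_le.1 hN, abs_le.1 hψi, abs_le.1 habs]

theorem vecAbs_diagonal_mulVec_sub_diagonal_mulVec {n : ℕ} {d₁ d₂ u v : Fin n → ℝ}
    (hd₁ : ∀ i, 0 ≤ d₁ i) (hd₂ : ∀ i, 0 ≤ d₂ i) (hu : ∀ i, 0 ≤ u i) (hv : ∀ i, 0 ≤ v i)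
    (huv : u ⬝ᵥ v = 0) :
    vecAbs (diagonal d₁ *ᵥ u - diagonal d₂ *ᵥ v) = diagonal d₁ *ᵥ u + diagonal d₂ *ᵥ v := by
  funext i
  have hi : u i * v i = 0 :=
    (sum_eq_zero_iff_of_nonneg fun j _ => mul_nonneg (hu j) (hv j)).1 huv i (mem_univ i)
  simp only [vecAbs, Pi.sub_apply, Pi.add_apply, mulVec_diagonal]
  rcases mul_eq_zero.1 hi with h | h
  · simp [h, abs_of_nonneg (hd₂ i), abs_of_nonneg (hv i)]
  · simp [h, abs_of_nonneg (hd₁ i), abs_of_nonneg (hu i)]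

theorem mulVec_eq_modulusRhs_of_ICPsol {n : ℕ} {A X Y : Matrix (Fin n) (Fin n) ℝ}
    (hA : A = X - Y) {d₁ d₂ : Fin n → ℝ} (hd₁ : ∀ i, 0 ≤ d₁ i) (hd₂ : ∀ i, 0 ≤ d₂ i)
    {q : Fin n → ℝ} {ψ : (Fin n → ℝ) → Fin n → ℝ} {zstar : Fin n → ℝ}
    (hz : ICPsol A q ψ zstar) :
    (diagonal d₁ * X + diagonal d₂) *ᵥ zstar =
      modulusRhs (diagonal d₁ * Y) (diagonal d₁ * A - diagonal d₂) (diagonal d₁) (diagonal d₂)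
        q ψ zstar := by
  obtain ⟨hw, hs, hws⟩ := hz
  have hinner : (diagonal d₁ * A - diagonal d₂) *ᵥ zstar + diagonal d₁ *ᵥ q +
      diagonal d₂ *ᵥ ψ zstar =
      diagonal d₁ *ᵥ (A *ᵥ zstar + q) - diagonal d₂ *ᵥ (zstar - ψ zstar) := by
    simp only [sub_mulVec, mulVec_add, mulVec_sub, ← mulVec_mulVec]
    abel
  rw [modulusRhs, hinner, vecAbs_diagonal_mulVec_sub_diagonal_mulVec hd₁ hd₂ hw hs hws, hA]
  simp only [add_mulVec, sub_mulVec, mulVec_add, mulVec_sub, ← mulVec_mulVec]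
  abel

open Filter Topology in
theorem tendsto_of_abs_sub_le_mulVec {n : ℕ} (W Q : Matrix (Fin n) (Fin n) ℝ)
    (F : (Fin n → ℝ) → Fin n → ℝ) {w : Fin n → ℝ} {θ : ℝ} (hw : ∀ j, 0 < w j)
    (hgap : ∀ i, 0 < dominanceGap W w i) (hQ : ∀ i j, 0 ≤ Q i j)
    (hQw : ∀ i, (Q *ᵥ w) i ≤ θ * dominanceGap W w i) (hθ₀ : 0 ≤ θ) (hθ₁ : θ < 1)
    {zstar : Fin n → ℝ} (hfix : W *ᵥ zstar = F zstar)
    (hF : ∀ y i, |F y i - F zstar i| ≤ (Q *ᵥ vecAbs (y - zstar)) i)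
    {z : ℕ → Fin n → ℝ} (hz : ∀ k, z (k + 1) = W⁻¹ *ᵥ F (z k)) :
    Tendsto z atTop (𝓝 zstar) := by
  have hW := isUnit_det_of_dominanceGap_pos W hw hgap
  have herr : ∀ k, W *ᵥ (z (k + 1) - zstar) = F (z k) - F zstar := fun k => by
    rw [mulVec_sub, hz, mulVec_mulVec, mul_nonsing_inv _ hW, one_mulVec, hfix]
  have hstep : ∀ k C, (∀ j, |z k j - zstar j| ≤ C * w j) →
      ∀ i, |z (k + 1) i - zstar i| ≤ θ * C * w i := fun k C hC =>
    norm_le_of_norm_mulVec_le W hw hgap hQ hQw (x := z (k + 1) - zstar) (y := z k - zstar)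
      (fun i => by rw [herr]; exact hF _ i) hC
  set C₀ := ∑ j, |z 0 j - zstar j| / w j
  have hbound : ∀ k j, |z k j - zstar j| ≤ θ ^ k * C₀ * w j := by
    intro k
    induction k with
    | zero =>
      intro j
      rw [pow_zero, one_mul, ← div_le_iff₀ (hw j)]
      exact single_le_sum (f := fun j => |z 0 j - zstar j| / w j)
        (fun l _ => div_nonneg (abs_nonneg _) (hw l).le) (mem_univ j)
    | succ k ih => simpa only [pow_succ', mul_assoc] using hstep k _ ih
  refine tendsto_pi_nhds.2 fun j => tendsto_iff_norm_sub_tendsto_zero.2 ?_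
  refine squeeze_zero (fun _ => norm_nonneg _) (fun k => hbound k j) ?_
  simpa using ((tendsto_pow_atTop_nhds_zero_of_lt_one hθ₀ hθ₁).mul_const C₀).mul_const (w j)

section SplittingEstimates

variable {n : ℕ} {A X Y G : Matrix (Fin n) (Fin n) ℝ} {d₁ d₂ : Fin n → ℝ}

theorem zMat_cmpMat_sub_matAbs_sub (hd₂ : ∀ i, 0 ≤ d₂ i) (hG : ∀ i j, 0 ≤ G i j) :
    ZMat (cmpMat (diagonal d₁ * X) - matAbs (diagonal d₁ * Y) - diagonal d₂ * G) := by
  intro i j hij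
  have := mul_nonneg (hd₂ i) (hG i j)
  simp only [Matrix.sub_apply, cmpMat, matAbs, if_neg hij, diagonal_mul]
  linarith [abs_nonneg (d₁ i * X i j), abs_nonneg (d₁ i * Y i j)]

theorem matAbs_add_matAbs_add_two_smul_nonneg (N B : Matrix (Fin n) (Fin n) ℝ)
    (hd₂ : ∀ i, 0 ≤ d₂ i) (hG : ∀ i j, 0 ≤ G i j) (i j : Fin n) :
    0 ≤ (matAbs N + matAbs B + 2 • (diagonal d₂ * G)) i j := by
  simp only [Matrix.add_apply, Matrix.smul_apply, matAbs, diagonal_mul]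
  have := mul_nonneg (hd₂ i) (hG i j)
  positivity

theorem diag_nonneg_of_mulVec_pos (hA : ∀ i, 0 < A i i) (hsplit : A = X - Y)
    (hd₁ : ∀ i, 0 ≤ d₁ i) (hd₂ : ∀ i, 0 ≤ d₂ i) (hG : ∀ i j, 0 ≤ G i j)
    {u : Fin n → ℝ} (hu : ∀ j, 0 < u j)
    (hpos : ∀ i, 0 < ((cmpMat (diagonal d₁ * X) - matAbs (diagonal d₁ * Y) -
      diagonal d₂ * G) *ᵥ u) i) (i : Fin n) : 0 ≤ X i i := by
  have hR := diag_pos_of_mulVec_pos (zMat_cmpMat_sub_matAbs_sub hd₂ hG) hu (hpos i)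
  simp only [Matrix.sub_apply, cmpMat, matAbs, if_true, diagonal_mul, abs_mul,
    abs_of_nonneg (hd₁ i)] at hR
  have hXY : |Y i i| < |X i i| :=
    lt_of_mul_lt_mul_left (by nlinarith [mul_nonneg (hd₂ i) (hG i i)]) (hd₁ i)
  have hAi := hA i
  rw [hsplit, Matrix.sub_apply] at hAi
  by_contra! hX
  linarith [abs_of_neg hX, neg_le_abs (Y i i)]

theorem add_two_mul_le_cmpMat (hsplit : A = X - Y) (hd₁ : ∀ i, 0 ≤ d₁ i) (hd₂ : ∀ i, 0 ≤ d₂ i)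
    (hd₂A : ∀ i, d₁ i * A i i ≤ d₂ i) (hX : ∀ i, 0 ≤ X i i) (i j : Fin n) :
    (matAbs (diagonal d₁ * Y) + matAbs (diagonal d₁ * A - diagonal d₂) +
        2 • (diagonal d₂ * G)) i j +
      2 * (cmpMat (diagonal d₁ * X) - matAbs (diagonal d₁ * Y) - diagonal d₂ * G) i j ≤
      cmpMat (diagonal d₁ * X + diagonal d₂) i j := by
  have hAij : A i j = X i j - Y i j := by rw [hsplit, Matrix.sub_apply]
  simp only [Matrix.add_apply, Matrix.sub_apply, Matrix.smul_apply, cmpMat, matAbs, diagonal_mul]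
  rw [nsmul_eq_mul, Nat.cast_ofNat]
  by_cases hij : i = j
  · subst hij
    have hYi := mul_le_mul_of_nonneg_left (le_abs_self (Y i i)) (hd₁ i)
    simp only [if_true, diagonal_apply_eq, abs_mul, abs_of_nonneg (hd₁ i), abs_of_nonneg (hX i),
      abs_of_nonpos (sub_nonpos.2 (hd₂A i)),
      abs_of_nonneg (add_nonneg (mul_nonneg (hd₁ i) (hX i)) (hd₂ i))]
    have hd₂Ai := hd₂A i
    rw [hAij] at hd₂Ai ⊢
    nlinarith
  · have hAb := mul_le_mul_of_nonneg_left (hAij ▸ abs_sub (X i j) (Y i j)) (hd₁ i)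
    simp only [if_neg hij, diagonal_apply_ne _ hij, sub_zero, add_zero, abs_mul,
      abs_of_nonneg (hd₁ i)]
    nlinarith

theorem mulVec_lt_dominanceGap (hA : ∀ i, 0 < A i i) (hsplit : A = X - Y)
    (hd₁ : ∀ i, 0 ≤ d₁ i) (hd₂ : ∀ i, 0 ≤ d₂ i) (hG : ∀ i j, 0 ≤ G i j)
    (hd₂A : ∀ i, d₁ i * A i i ≤ d₂ i) {u : Fin n → ℝ} (hu : ∀ j, 0 < u j)
    (hpos : ∀ i, 0 < ((cmpMat (diagonal d₁ * X) - matAbs (diagonal d₁ * Y) -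
      diagonal d₂ * G) *ᵥ u) i) (i : Fin n) :
    ((matAbs (diagonal d₁ * Y) + matAbs (diagonal d₁ * A - diagonal d₂) +
        2 • (diagonal d₂ * G)) *ᵥ u) i < dominanceGap (diagonal d₁ * X + diagonal d₂) u i := by
  have hX := diag_nonneg_of_mulVec_pos hA hsplit hd₁ hd₂ hG hu hpos
  have hpos_i := hpos i
  rw [dominanceGap_eq_cmpMat_mulVec]
  simp only [mulVec, dotProduct] at hpos_i ⊢
  have hsum := sum_le_sum fun j (_ : j ∈ univ) => mul_le_mul_of_nonneg_right
    (add_two_mul_le_cmpMat (G := G) hsplit hd₁ hd₂ hd₂A hX i j) (hu j).le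
  simp only [add_mul, mul_assoc, sum_add_distrib, ← mul_sum] at hsum
  linarith

theorem dominanceGap_diagonal_mul_add_le (M : Matrix (Fin n) (Fin n) ℝ) (f : Fin n → ℝ)
    (hd₁ : ∀ i, 0 ≤ d₁ i) (hd₂ : ∀ i, 0 ≤ d₂ i) {u : Fin n → ℝ} (hu : ∀ j, 0 ≤ u j)
    (i : Fin n) :
    dominanceGap (diagonal d₁ * (M + diagonal f) + diagonal d₂) u i ≤
      dominanceGap (cmpMat (diagonal d₁ * M) + matAbs (diagonal d₁ * diagonal f) +
        diagonal d₂) u i := by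
  rw [dominanceGap_eq_cmpMat_mulVec, dominanceGap_eq_cmpMat_mulVec, mulVec, mulVec]
  refine sum_le_sum fun j _ => mul_le_mul_of_nonneg_right ?_ (hu j)
  simp only [cmpMat, matAbs, Matrix.add_apply, diagonal_mul]
  by_cases hij : i = j
  · subst hij
    simp only [if_true, diagonal_apply_eq, abs_mul, abs_of_nonneg (hd₁ i)]
    rw [abs_of_nonneg (add_nonneg (add_nonneg (mul_nonneg (hd₁ i) (abs_nonneg _))
      (mul_nonneg (hd₁ i) (abs_nonneg _))) (hd₂ i))]
    calc |d₁ i * (M i i + f i) + d₂ i| ≤ |d₁ i * (M i i + f i)| + |d₂ i| := abs_add_le _ _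
      _ ≤ d₁ i * |M i i| + d₁ i * |f i| + d₂ i := by
        rw [abs_mul, abs_of_nonneg (hd₁ i), abs_of_nonneg (hd₂ i)]
        nlinarith [abs_add_le (M i i) (f i), hd₁ i]
  · simp [hij, abs_mul, abs_of_nonneg (hd₁ i)]

end SplittingEstimates

theorem exists_nonneg_lt_one_le_mul {ι : Type*} [Fintype ι] {a b : ι → ℝ}
    (hab : ∀ i, b i < a i) (hb : ∀ i, 0 ≤ b i) : ∃ θ, 0 ≤ θ ∧ θ < 1 ∧ ∀ i, b i ≤ θ * a i := by
  have ha : ∀ i, 0 < a i := fun i => (hb i).trans_lt (hab i)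
  refine ⟨(univ.sup fun i => (b i / a i).toNNReal : NNReal), NNReal.coe_nonneg _, ?_,
    fun i => ?_⟩
  · rw [NNReal.coe_lt_one, Finset.sup_lt_iff zero_lt_one]
    exact fun i _ => Real.toNNReal_lt_one.2 ((div_lt_one (ha i)).2 (hab i))
  · rw [← div_le_iff₀ (ha i)]
    exact (Real.le_coe_toNNReal _).trans
      (NNReal.coe_le_coe.2 (le_sup (f := fun i => (b i / a i).toNNReal) (mem_univ i)))

theorem PosDiag.exists_diagonal {n : ℕ} {Φ : Matrix (Fin n) (Fin n) ℝ} (h : PosDiag Φ) :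
    ∃ d : Fin n → ℝ, (∀ i, 0 < d i) ∧ Φ = diagonal d :=
  ⟨Φ.diag, h.2, h.1.diagonal_diag.symm⟩

theorem stmt_11_general {n : ℕ} (A M₁ N₁ φ φ₁ φ₂ G U : Matrix (Fin n) (Fin n) ℝ)
    (hA : HplusMatrix A)
    (hsplit : A = (M₁ + φ) - (N₁ + φ))
    (hφ : φ.IsDiag) (hφ₁ : PosDiag φ₁) (hφ₂ : PosDiag φ₂)
    (hG : ∀ i j, 0 ≤ G i j)
    (hU : PosDiag U)
    (hφ₂D : ∀ i j, (φ₁ * Matrix.diagonal A.diag) i j ≤ φ₂ i j)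
    (hpos : ∀ i, 0 < (((cmpMat (φ₁ * M₁ + φ₁ * φ) - matAbs (φ₁ * N₁ + φ₁ * φ) - φ₂ * G) * U) *ᵥ
      (fun _ => (1 : ℝ))) i) :
    specRad ((cmpMat (φ₁ * M₁) + matAbs (φ₁ * φ) + φ₂)⁻¹ *
        (matAbs (φ₁ * N₁ + φ₁ * φ) + matAbs (φ₁ * A - φ₂) + 2 • (φ₂ * G))) < 1 ∧
      ∀ (q : Fin n → ℝ) (ψ : (Fin n → ℝ) → (Fin n → ℝ)),
        (∀ x y : Fin n → ℝ, ∀ i, |ψ x i - ψ y i| ≤ (G *ᵥ vecAbs (x - y)) i) →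
        ∀ zstar : Fin n → ℝ, ICPsol A q ψ zstar →
          ∀ z : ℕ → Fin n → ℝ,
            (∀ k, z (k + 1) = (φ₁ * M₁ + φ₁ * φ + φ₂)⁻¹ *ᵥ
              ((φ₁ * N₁ + φ₁ * φ) *ᵥ z k +
                vecAbs ((φ₁ * A - φ₂) *ᵥ z k + φ₁ *ᵥ q + φ₂ *ᵥ ψ (z k)) -
                φ₁ *ᵥ q + φ₂ *ᵥ ψ (z k))) →
            Filter.Tendsto z Filter.atTop (nhds zstar) := by
  obtain ⟨f, rfl⟩ : ∃ f, φ = diagonal f := ⟨φ.diag, hφ.diagonal_diag.symm⟩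
  obtain ⟨d₁, hd₁, rfl⟩ := hφ₁.exists_diagonal
  obtain ⟨d₂, hd₂, rfl⟩ := hφ₂.exists_diagonal
  obtain ⟨u, hu, rfl⟩ := hU.exists_diagonal
  have hd₁' : ∀ i, 0 ≤ d₁ i := fun i => (hd₁ i).le
  have hd₂' : ∀ i, 0 ≤ d₂ i := fun i => (hd₂ i).le
  have hd₂A : ∀ i, d₁ i * A i i ≤ d₂ i := fun i => by simpa using hφ₂D i i
  have hu1 : diagonal u *ᵥ (fun _ => (1 : ℝ)) = u := funext fun i => by simp [mulVec_diagonal]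
  simp only [← mulVec_mulVec, hu1] at hpos
  simp only [← Matrix.mul_add] at hpos ⊢
  have hQ := matAbs_add_matAbs_add_two_smul_nonneg (diagonal d₁ * (N₁ + diagonal f))
    (diagonal d₁ * A - diagonal d₂) hd₂' hG
  have hQu := mulVec_apply_nonneg hQ fun j => (hu j).le
  have hQW := mulVec_lt_dominanceGap hA.2 hsplit hd₁' hd₂' hG hd₂A hu hpos
  obtain ⟨θ, hθ₀, hθ₁, hθ⟩ := exists_nonneg_lt_one_le_mul hQW hQu
  have hgapW i := (hQu i).trans_lt (hQW i)
  have hWP := dominanceGap_diagonal_mul_add_le M₁ f hd₁' hd₂' (fun j => (hu j).le)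
  refine ⟨(specRad_inv_mul_le _ _ hu (fun i => (hgapW i).trans_le (hWP i)) hQ
    (fun i => (hθ i).trans (mul_le_mul_of_nonneg_left (hWP i) hθ₀)) hθ₀).trans_lt hθ₁, ?_⟩
  intro q ψ hψ zstar hsol z hz
  exact tendsto_of_abs_sub_le_mulVec _ _ _ hu hgapW hQ hθ hθ₀ hθ₁
    (mulVec_eq_modulusRhs_of_ICPsol hsplit hd₁' hd₂' hsol)
    (fun y i => abs_modulusRhs_sub_le _ _ _ G hd₂' q hψ y zstar i) hz

/-- Theorem 4.4, case (φ₂ ≥ D_{φ₁}). -/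
theorem stmt_11 {n : ℕ} (A M₁ N₁ φ φ₁ φ₂ G U : Matrix (Fin n) (Fin n) ℝ)
    (hA : HplusMatrix A)
    (hsplit : A = (M₁ + φ) - (N₁ + φ))
    (hHsplit : NonsingularMMatrix (cmpMat (M₁ + φ) - matAbs (N₁ + φ)))
    (hφ : φ.IsDiag) (hφ₁ : PosDiag φ₁) (hφ₂ : PosDiag φ₂)
    (hG : ∀ i j, 0 ≤ G i j)
    (hU : PosDiag U)
    (hUsdd : SDD ((cmpMat (M₁ + φ) - matAbs (N₁ + φ)) * U))
    (hφ₂D : ∀ i j, (φ₁ * Matrix.diagonal A.diag) i j ≤ φ₂ i j)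
    (hpos : ∀ i, 0 < (((cmpMat (φ₁ * M₁ + φ₁ * φ) - matAbs (φ₁ * N₁ + φ₁ * φ) - φ₂ * G) * U) *ᵥ
      (fun _ => (1 : ℝ))) i) :
    specRad ((cmpMat (φ₁ * M₁) + matAbs (φ₁ * φ) + φ₂)⁻¹ *
        (matAbs (φ₁ * N₁ + φ₁ * φ) + matAbs (φ₁ * A - φ₂) + 2 • (φ₂ * G))) < 1 ∧
      ∀ (q : Fin n → ℝ) (ψ : (Fin n → ℝ) → (Fin n → ℝ)),
        (∀ x y : Fin n → ℝ, ∀ i, |ψ x i - ψ y i| ≤ (G *ᵥ vecAbs (x - y)) i) →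
        ∀ zstar : Fin n → ℝ, ICPsol A q ψ zstar →
          ∀ z : ℕ → Fin n → ℝ,
            (∀ k, z (k + 1) = (φ₁ * M₁ + φ₁ * φ + φ₂)⁻¹ *ᵥ
              ((φ₁ * N₁ + φ₁ * φ) *ᵥ z k +
                vecAbs ((φ₁ * A - φ₂) *ᵥ z k + φ₁ *ᵥ q + φ₂ *ᵥ ψ (z k)) -
                φ₁ *ᵥ q + φ₂ *ᵥ ψ (z k))) →
            Filter.Tendsto z Filter.atTop (nhds zstar) :=
  stmt_11_general A M₁ N₁ φ φ₁ φ₂ G U hA hsplit hφ hφ₁ hφ₂ hG hU hφ₂D hpos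
end
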